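/- arXiv:1810.01535 — 6 statements merged into one kernel-verified Lean document; each statement's English description precedes it below -/
import Mathlib

section
/- Let Γ be a finite connected G-vertex-transitive non-complete graph of girth 3. Then Γ is (G,3)-CH if and only if for a vertex v, the stabilizer G_v induces on Γ(v) a transitive permutation group of rank 3. -/
open SimpleGraph

variable {V : Type*}

/-- `Γ` is `(G,3)`-connected-homogeneous: every isomorphism between connected induced
subgraphs of order at most 3 extends to an automorphism in `G`. -/
def IsCH3 (Γ : SimpleGraph V) (G : Subgroup (Γ ≃g Γ)) : Prop :=
  ∀ (A B : Set V), A.ncard ≤ 3 → (SimpleGraph.induce A Γ).Connected →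
    ∀ φ : (SimpleGraph.induce A Γ) ≃g (SimpleGraph.induce B Γ),
      ∃ g ∈ G, ∀ a : A, (g : Γ ≃g Γ) a.1 = ((φ a) : V)

/-- `G` is transitive on the vertices of `Γ`. -/
def VertexTrans (Γ : SimpleGraph V) (G : Subgroup (Γ ≃g Γ)) : Prop :=
  ∀ u v : V, ∃ g ∈ G, (g : Γ ≃g Γ) u = v

/-- The stabiliser of `u` in `G` is transitive on the neighbourhood of `u`. -/
def StabTrans (Γ : SimpleGraph V) (G : Subgroup (Γ ≃g Γ)) (u : V) : Prop :=
  ∀ v ∈ Γ.neighborSet u, ∀ w ∈ Γ.neighborSet u,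
    ∃ g ∈ G, (g : Γ ≃g Γ) u = u ∧ (g : Γ ≃g Γ) v = w

/-- The stabiliser of `u` in `G` is 2-transitive on the neighbourhood of `u`. -/
def Stab2Trans (Γ : SimpleGraph V) (G : Subgroup (Γ ≃g Γ)) (u : V) : Prop :=
  StabTrans Γ G u ∧
  ∀ v w v' w', v ∈ Γ.neighborSet u → w ∈ Γ.neighborSet u →
    v' ∈ Γ.neighborSet u → w' ∈ Γ.neighborSet u → v ≠ w → v' ≠ w' →
    ∃ g ∈ G, (g : Γ ≃g Γ) u = u ∧ (g : Γ ≃g Γ) v = v' ∧ (g : Γ ≃g Γ) w = w'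

/-- Two ordered pairs are equivalent under the stabiliser of `u` in `G`. -/
def PairEquiv (Γ : SimpleGraph V) (G : Subgroup (Γ ≃g Γ)) (u : V) (p q : V × V) : Prop :=
  ∃ g ∈ G, (g : Γ ≃g Γ) u = u ∧ (g : Γ ≃g Γ) p.1 = q.1 ∧ (g : Γ ≃g Γ) p.2 = q.2

/-- The stabiliser of `u` in `G` induces on the neighbourhood of `u` a transitive group
of rank 3: it is transitive, and it has exactly three orbits on ordered pairs of
neighbours of `u`. -/
def StabRank3 (Γ : SimpleGraph V) (G : Subgroup (Γ ≃g Γ)) (u : V) : Prop :=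
  StabTrans Γ G u ∧
  ∃ p₁ p₂ p₃ : V × V,
    (p₁.1 ∈ Γ.neighborSet u ∧ p₁.2 ∈ Γ.neighborSet u) ∧
    (p₂.1 ∈ Γ.neighborSet u ∧ p₂.2 ∈ Γ.neighborSet u) ∧
    (p₃.1 ∈ Γ.neighborSet u ∧ p₃.2 ∈ Γ.neighborSet u) ∧
    ¬ PairEquiv Γ G u p₁ p₂ ∧ ¬ PairEquiv Γ G u p₁ p₃ ∧ ¬ PairEquiv Γ G u p₂ p₃ ∧
    ∀ q : V × V, q.1 ∈ Γ.neighborSet u → q.2 ∈ Γ.neighborSet u →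
      PairEquiv Γ G u p₁ q ∨ PairEquiv Γ G u p₂ q ∨ PairEquiv Γ G u p₃ q

/-- A graph is complete multipartite iff non-adjacency is transitive. -/
def IsCompleteMultipartite (Γ : SimpleGraph V) : Prop :=
  Transitive fun x y => ¬ Γ.Adj x y

/-- The disjoint union `rKℓ` of `r` complete graphs on `ℓ` vertices. -/
def cliquesGraph (r ℓ : ℕ) : SimpleGraph (Fin r × Fin ℓ) where
  Adj x y := x.1 = y.1 ∧ x.2 ≠ y.2
  symm := ⟨fun x y h => ⟨h.1.symm, h.2.symm⟩⟩
  loopless := ⟨fun x h => h.2 rfl⟩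


/-!
Ordered pairs of neighbours of a vertex come in three types: equal, adjacent, and distinct but
non-adjacent; automorphisms preserve the type. Girth 3 and vertex-transitivity put a triangle
through every vertex, and connectedness plus non-completeness give every vertex two non-adjacent
neighbours, so all three types occur in each `Γ(u)`. Hence `G_u` has rank 3 on `Γ(u)` exactly
when it is transitive on the pairs of each type. This is `(G,3)`-CH: a connected graph on at
most three vertices is a single vertex or a vertex `m` with neighbours `p, q`, and an isomorphism
of such graphs extends by first moving `m` into place (vertex-transitivity) and then moving
`(p, q)` within the stabiliser of the image of `m`.
-/

/-- The `p i` meet every class of `R` on `D`, so there are at most `card κ` classes, and an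
invariant attaining all of `κ` on `D` must separate them. -/
theorem Equivalence.rel_iff_apply_eq_of_surjOn {X κ : Type*} [Finite κ] {R : X → X → Prop}
    (hR : Equivalence R) {f : X → κ} (hf : ∀ ⦃x y⦄, R x y → f x = f y) {D : Set X}
    (hfD : Set.SurjOn f D Set.univ) {p : κ → X} (hp : ∀ x ∈ D, ∃ i, R (p i) x)
    {x y : X} (hx : x ∈ D) (hy : y ∈ D) : R x y ↔ f x = f y := by
  refine ⟨fun h => hf h, fun hxy => ?_⟩
  have hsurj : Function.Surjective (f ∘ p) := fun k => by
    obtain ⟨z, hz, rfl⟩ := hfD (Set.mem_univ k)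
    obtain ⟨i, hi⟩ := hp z hz
    exact ⟨i, hf hi⟩
  obtain ⟨i, hi⟩ := hp x hx
  obtain ⟨j, hj⟩ := hp y hy
  obtain rfl : i = j := Finite.injective_iff_surjective.mpr hsurj <| by
    simp only [Function.comp_apply, hf hi, hf hj, hxy]
  exact hR.trans (hR.symm hi) hj

namespace SimpleGraph

variable {Γ : SimpleGraph V}

theorem induce_connected_of_forall_adj {A : Set V} {c : V} (hc : c ∈ A)
    (h : ∀ a ∈ A, a ≠ c → Γ.Adj c a) : (Γ.induce A).Connected := by
  have hreach (a : A) : (Γ.induce A).Reachable ⟨c, hc⟩ a := by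
    by_cases hac : a.1 = c
    · obtain rfl : a = ⟨c, hc⟩ := Subtype.ext hac
      rfl
    · exact Adj.reachable (by simpa using h a a.2 hac)
  exact (connected_iff _).mpr ⟨fun a b => (hreach a).symm.trans (hreach b), ⟨⟨c, hc⟩⟩⟩

theorem Connected.exists_adj_mem_of_induce {A : Set V} (hA : (Γ.induce A).Connected) {a b : V}
    (ha : a ∈ A) (hb : b ∈ A) (hab : a ≠ b) : ∃ c ∈ A, Γ.Adj a c := by
  obtain ⟨c, hc⟩ := (hA.preconnected ⟨a, ha⟩ ⟨b, hb⟩).nonempty_neighborSet_left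
    (by simpa using hab)
  exact ⟨c, c.2, by simpa using hc⟩

theorem Connected.exists_center_of_induce {A : Set V} (hA : (Γ.induce A).Connected)
    (hfin : A.Finite) (hcard : A.ncard ≤ 3) : ∃ m ∈ A, ∀ a ∈ A, a ≠ m → Γ.Adj m a := by
  obtain ⟨⟨a, ha⟩⟩ := hA.nonempty
  by_cases hcen : ∀ b ∈ A, b ≠ a → Γ.Adj a b
  · exact ⟨a, ha, hcen⟩
  push Not at hcen
  obtain ⟨b, hb, hba, hab⟩ := hcen
  obtain ⟨c, hc, hac⟩ := hA.exists_adj_mem_of_induce ha hb hba.symm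
  have hbc : b ≠ c := by rintro rfl; exact hab hac
  have hA3 : A = {a, b, c} := by
    refine (Set.eq_of_subset_of_ncard_le (by simp [Set.insert_subset_iff, ha, hb, hc]) ?_
      hfin).symm
    rwa [Set.ncard_eq_three.mpr ⟨a, b, c, hba.symm, hac.ne, hbc, rfl⟩]
  obtain ⟨d, hd, hbd⟩ := hA.exists_adj_mem_of_induce hb ha hba
  obtain rfl : d = c := by
    rw [hA3] at hd
    rcases hd with rfl | rfl | rfl
    · exact absurd hbd.symm hab
    · exact absurd hbd (Γ.irrefl)
    · rfl
  refine ⟨d, hc, ?_⟩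
  rw [hA3]
  rintro x (rfl | rfl | rfl) hx
  · exact hac.symm
  · exact hbd.symm
  · exact absurd rfl hx

theorem Connected.exists_eq_singleton_or_eq_insert_pair_of_induce {A : Set V}
    (hA : (Γ.induce A).Connected) (hfin : A.Finite) (hcard : A.ncard ≤ 3) :
    ∃ m, A = {m} ∨ ∃ p q, Γ.Adj m p ∧ Γ.Adj m q ∧ A = {m, p, q} := by
  obtain ⟨m, hm, hcen⟩ := hA.exists_center_of_induce hfin hcard
  have hAm : A = insert m (A \ {m}) := by rw [Set.insert_sdiff_singleton, Set.insert_eq_of_mem hm]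
  have hadj : ∀ p ∈ A \ {m}, Γ.Adj m p := fun p hp => hcen p hp.1 hp.2
  have hS : (A \ {m}).ncard ≤ 2 := by rw [Set.ncard_sdiff_singleton_of_mem hm]; omega
  refine ⟨m, ?_⟩
  obtain h0 | h1 | h2 : (A \ {m}).ncard = 0 ∨ (A \ {m}).ncard = 1 ∨ (A \ {m}).ncard = 2 := by
    omega
  · left
    rw [hAm, (Set.ncard_eq_zero hfin.sdiff).mp h0, insert_empty_eq]
  · obtain ⟨p, hp⟩ := Set.ncard_eq_one.mp h1
    have hmp := hadj p (by simp [hp])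
    exact .inr ⟨p, p, hmp, hmp, by rw [hAm, hp, Set.pair_eq_singleton]⟩
  · obtain ⟨p, q, -, hpq⟩ := Set.ncard_eq_two.mp h2
    exact .inr ⟨p, q, hadj p (by simp [hpq]), hadj q (by simp [hpq]), by rw [hAm, hpq]⟩

theorem exists_triangle_of_girth_eq_three (h : Γ.girth = 3) :
    ∃ a b c, Γ.Adj a b ∧ Γ.Adj a c ∧ Γ.Adj b c := by
  classical
  have hcyc : ¬Γ.IsAcyclic := fun hac => by simp [girth_eq_zero.mpr hac] at h
  obtain ⟨u, w, hw, hlen⟩ := exists_girth_eq_length.mpr hcyc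
  obtain ⟨s, hs⟩ := is3Clique_iff_exists_cycle_length_three.mpr ⟨u, w, hw, by omega⟩
  obtain ⟨a, b, c, hab, hac, hbc, -⟩ := is3Clique_iff.mp hs
  exact ⟨a, b, c, hab, hac, hbc⟩

theorem Connected.exists_adj_adj_not_adj_of_ne_top (hconn : Γ.Connected) (hnc : Γ ≠ ⊤) :
    ∃ v a b, Γ.Adj v a ∧ Γ.Adj v b ∧ a ≠ b ∧ ¬Γ.Adj a b := by
  obtain ⟨x, y, hxy, hnadj⟩ : ∃ x y, x ≠ y ∧ ¬Γ.Adj x y := by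
    by_contra! h
    exact hnc (by ext x y; rw [top_adj]; exact ⟨Adj.ne, h x y⟩)
  obtain ⟨p, hp⟩ := hconn.exists_path_of_dist x y
  obtain ⟨a, v, b, hav, hvb, hab, hne⟩ :=
    Walk.exists_adj_adj_not_adj_ne hp.2 (hconn.one_lt_dist_of_ne_of_not_adj hxy hnadj)
  exact ⟨v, a, b, hav.symm, hvb, hne, hab⟩

noncomputable def inducedRangeIso {ι : Type*} {x y : ι → V}
    (heq : ∀ i j, x i = x j ↔ y i = y j) (hadj : ∀ i j, Γ.Adj (x i) (x j) ↔ Γ.Adj (y i) (y j)) :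
    Γ.induce (Set.range x) ≃g Γ.induce (Set.range y) where
  toFun a := ⟨y (Set.rangeSplitting x a), Set.mem_range_self _⟩
  invFun b := ⟨x (Set.rangeSplitting y b), Set.mem_range_self _⟩
  left_inv a := Subtype.ext <|
    ((heq _ _).mpr (Set.apply_rangeSplitting y _)).trans (Set.apply_rangeSplitting x a)
  right_inv b := Subtype.ext <|
    ((heq _ _).mp (Set.apply_rangeSplitting x _)).trans (Set.apply_rangeSplitting y b)
  map_rel_iff' := by
    simp [← hadj, Set.apply_rangeSplitting]

theorem inducedRangeIso_apply {ι : Type*} {x y : ι → V}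
    (heq : ∀ i j, x i = x j ↔ y i = y j) (hadj : ∀ i j, Γ.Adj (x i) (x j) ↔ Γ.Adj (y i) (y j))
    (i : ι) : (inducedRangeIso heq hadj ⟨x i, Set.mem_range_self i⟩ : V) = y i :=
  (heq _ _).mp (Set.apply_rangeSplitting x _)

open Classical in
noncomputable def pairType (Γ : SimpleGraph V) (p : V × V) : Fin 3 :=
  if p.1 = p.2 then 0 else if Γ.Adj p.1 p.2 then 1 else 2

theorem pairType_eq_pairType_iff {p q : V × V} :
    pairType Γ p = pairType Γ q ↔ (p.1 = p.2 ↔ q.1 = q.2) ∧ (Γ.Adj p.1 p.2 ↔ Γ.Adj q.1 q.2) := by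
  unfold pairType
  split_ifs <;> simp_all

@[simp]
theorem pairType_self (a : V) : pairType Γ (a, a) = 0 := by
  simp [pairType]

theorem pairType_of_adj {a b : V} (h : Γ.Adj a b) : pairType Γ (a, b) = 1 := by
  simp [pairType, h, h.ne]

theorem pairType_of_not_adj {a b : V} (hne : a ≠ b) (h : ¬Γ.Adj a b) : pairType Γ (a, b) = 2 := by
  simp [pairType, h, hne]

theorem pairType_map (g : Γ ≃g Γ) (a b : V) : pairType Γ (g a, g b) = pairType Γ (a, b) :=
  pairType_eq_pairType_iff.mpr ⟨g.injective.eq_iff, g.map_adj_iff⟩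

theorem pairType_map_induce {A B : Set V} (φ : Γ.induce A ≃g Γ.induce B) (a b : A) :
    pairType Γ ((φ a : V), (φ b : V)) = pairType Γ ((a : V), (b : V)) :=
  pairType_eq_pairType_iff.mpr
    ⟨by rw [Subtype.coe_inj, Subtype.coe_inj, φ.injective.eq_iff], φ.map_adj_iff⟩

end SimpleGraph

section

variable {Γ : SimpleGraph V} {G : Subgroup (Γ ≃g Γ)}

theorem pairEquiv_equivalence (u : V) : Equivalence (PairEquiv Γ G u) where
  refl _ := ⟨1, G.one_mem, rfl, rfl, rfl⟩
  symm := by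
    rintro p q ⟨g, hg, hu, h₁, h₂⟩
    refine ⟨g⁻¹, G.inv_mem hg, ?_, ?_, ?_⟩
    · nth_rw 1 [← hu]
      exact RelIso.inv_apply_self g u
    · rw [← h₁, RelIso.inv_apply_self]
    · rw [← h₂, RelIso.inv_apply_self]
  trans := by
    rintro p q r ⟨g, hg, hu, h₁, h₂⟩ ⟨g', hg', hu', h₁', h₂'⟩
    exact ⟨g' * g, G.mul_mem hg' hg, by simp [hu, hu'], by simp [h₁, h₁'], by simp [h₂, h₂']⟩

theorem PairEquiv.pairType_eq {u : V} {p q : V × V} (h : PairEquiv Γ G u p q) :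
    pairType Γ p = pairType Γ q := by
  obtain ⟨g, -, -, h₁, h₂⟩ := h
  rw [← pairType_map g, h₁, h₂]

def StabPairTypeTrans (Γ : SimpleGraph V) (G : Subgroup (Γ ≃g Γ)) (u : V) : Prop :=
  ∀ p ∈ Γ.neighborSet u ×ˢ Γ.neighborSet u, ∀ q ∈ Γ.neighborSet u ×ˢ Γ.neighborSet u,
    pairType Γ p = pairType Γ q → PairEquiv Γ G u p q

theorem stabRank3_iff_stabPairTypeTrans {u : V}
    (htypes : Set.SurjOn (pairType Γ) (Γ.neighborSet u ×ˢ Γ.neighborSet u) Set.univ) :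
    StabRank3 Γ G u ↔ StabPairTypeTrans Γ G u := by
  constructor
  · rintro ⟨-, p₁, p₂, p₃, -, -, -, -, -, -, hcover⟩ p hp q hq hpq
    refine ((pairEquiv_equivalence u).rel_iff_apply_eq_of_surjOn (fun _ _ h => h.pairType_eq)
      htypes (p := ![p₁, p₂, p₃]) ?_ hp hq).mpr hpq
    rintro x ⟨hx₁, hx₂⟩
    rcases hcover x hx₁ hx₂ with h | h | h
    exacts [⟨0, h⟩, ⟨1, h⟩, ⟨2, h⟩]
  · intro h
    obtain ⟨t₀, ht₀, h₀⟩ := htypes (Set.mem_univ 0)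
    obtain ⟨t₁, ht₁, h₁⟩ := htypes (Set.mem_univ 1)
    obtain ⟨t₂, ht₂, h₂⟩ := htypes (Set.mem_univ 2)
    have hne {x y : V × V} (hxy : pairType Γ x ≠ pairType Γ y) : ¬PairEquiv Γ G u x y :=
      fun h' => hxy h'.pairType_eq
    refine ⟨fun v hv w hw => ?_, t₀, t₁, t₂, ht₀, ht₁, ht₂, hne (by simp [h₀, h₁]),
      hne (by simp [h₀, h₂]), hne (by simp [h₁, h₂]), fun q hq₁ hq₂ => ?_⟩
    · obtain ⟨g, hg, hu, hvw, -⟩ := h (v, v) ⟨hv, hv⟩ (w, w) ⟨hw, hw⟩ (by simp)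
      exact ⟨g, hg, hu, hvw⟩
    · have hk : ∀ k : Fin 3, k = 0 ∨ k = 1 ∨ k = 2 := by decide
      rcases hk (pairType Γ q) with hq | hq | hq
      · exact .inl (h t₀ ht₀ q ⟨hq₁, hq₂⟩ (h₀.trans hq.symm))
      · exact .inr (.inl (h t₁ ht₁ q ⟨hq₁, hq₂⟩ (h₁.trans hq.symm)))
      · exact .inr (.inr (h t₂ ht₂ q ⟨hq₁, hq₂⟩ (h₂.trans hq.symm)))

theorem IsCH3.exists_map_family (hCH : IsCH3 Γ G) {ι : Type*} {x y : ι → V}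
    (hcard : (Set.range x).ncard ≤ 3) (hconn : (Γ.induce (Set.range x)).Connected)
    (heq : ∀ i j, x i = x j ↔ y i = y j) (hadj : ∀ i j, Γ.Adj (x i) (x j) ↔ Γ.Adj (y i) (y j)) :
    ∃ g ∈ G, ∀ i, g (x i) = y i := by
  obtain ⟨g, hg, hgx⟩ := hCH _ _ hcard hconn (inducedRangeIso heq hadj)
  exact ⟨g, hg, fun i => (hgx ⟨x i, Set.mem_range_self i⟩).trans (inducedRangeIso_apply heq hadj i)⟩

theorem IsCH3.exists_map_cherry (hCH : IsCH3 Γ G) {v a b v' a' b' : V}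
    (ha : Γ.Adj v a) (hb : Γ.Adj v b) (ha' : Γ.Adj v' a') (hb' : Γ.Adj v' b')
    (heq : a = b ↔ a' = b') (hadj : Γ.Adj a b ↔ Γ.Adj a' b') :
    ∃ g ∈ G, g v = v' ∧ g a = a' ∧ g b = b' := by
  have hrange : Set.range ![v, a, b] = {v, a, b} := by
    simp only [Matrix.range_cons, Matrix.range_empty, Set.union_empty, Set.singleton_union]
  obtain ⟨g, hg, hgx⟩ := hCH.exists_map_family (x := ![v, a, b]) (y := ![v', a', b'])
    (by
      rw [hrange]
      exact (Set.ncard_insert_le _ _).trans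
        (Nat.succ_le_succ ((Set.ncard_insert_le _ _).trans (by simp))))
    (by
      rw [hrange]
      refine induce_connected_of_forall_adj (c := v) (by simp) ?_
      rintro x (rfl | rfl | rfl) hx
      exacts [absurd rfl hx, ha, hb])
    (by
      intro i j
      fin_cases i <;> fin_cases j <;>
        simp [ha.ne, hb.ne, ha'.ne, hb'.ne, ha.ne', hb.ne', ha'.ne', hb'.ne', heq, eq_comm])
    (by
      intro i j
      fin_cases i <;> fin_cases j <;>
        simp [ha, hb, ha', hb', hadj, adj_comm])
  exact ⟨g, hg, hgx 0, hgx 1, hgx 2⟩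

theorem IsCH3.stabPairTypeTrans (hCH : IsCH3 Γ G) (u : V) : StabPairTypeTrans Γ G u := by
  rintro ⟨a, b⟩ ⟨ha, hb⟩ ⟨a', b'⟩ ⟨ha', hb'⟩ hab
  obtain ⟨heq, hadj⟩ := pairType_eq_pairType_iff.mp hab
  exact hCH.exists_map_cherry ha hb ha' hb' heq hadj

theorem isCH3_of_forall_stabPairTypeTrans [Finite V] (hvt : VertexTrans Γ G)
    (h : ∀ u, StabPairTypeTrans Γ G u) : IsCH3 Γ G := by
  intro A B hcard hA φ
  obtain ⟨m, rfl | ⟨p, q, hp, hq, rfl⟩⟩ :=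
    hA.exists_eq_singleton_or_eq_insert_pair_of_induce (Set.toFinite A) hcard
  · obtain ⟨g, hg, hgm⟩ := hvt m (φ ⟨m, rfl⟩)
    exact ⟨g, hg, by rintro ⟨_, rfl⟩; exact hgm⟩
  have hmA : m ∈ ({m, p, q} : Set V) := by simp
  have hpA : p ∈ ({m, p, q} : Set V) := by simp
  have hqA : q ∈ ({m, p, q} : Set V) := by simp
  obtain ⟨g₁, hg₁, hg₁m⟩ := hvt m (φ ⟨m, hmA⟩)
  obtain ⟨g₂, hg₂, hg₂m, hg₂p, hg₂q⟩ := h (φ ⟨m, hmA⟩) (g₁ p, g₁ q)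
    ⟨hg₁m ▸ g₁.map_adj_iff.mpr hp, hg₁m ▸ g₁.map_adj_iff.mpr hq⟩
    ((φ ⟨p, hpA⟩ : V), (φ ⟨q, hqA⟩ : V))
    ⟨φ.map_adj_iff.mpr hp, φ.map_adj_iff.mpr hq⟩
    (by rw [pairType_map g₁, pairType_map_induce φ ⟨p, hpA⟩ ⟨q, hqA⟩])
  refine ⟨g₂ * g₁, G.mul_mem hg₂ hg₁, ?_⟩
  rintro ⟨x, rfl | rfl | rfl⟩
  · exact (congrArg g₂ hg₁m).trans hg₂m
  · exact hg₂p
  · exact hg₂q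

theorem isCH3_iff_forall_stabPairTypeTrans [Finite V] (hvt : VertexTrans Γ G) :
    IsCH3 Γ G ↔ ∀ u, StabPairTypeTrans Γ G u :=
  ⟨fun hCH => hCH.stabPairTypeTrans, isCH3_of_forall_stabPairTypeTrans hvt⟩

theorem VertexTrans.exists_pairType_eq (hvt : VertexTrans Γ G) {v a b : V} (ha : Γ.Adj v a)
    (hb : Γ.Adj v b) (u : V) :
    ∃ p ∈ Γ.neighborSet u ×ˢ Γ.neighborSet u, pairType Γ p = pairType Γ (a, b) := by
  obtain ⟨g, -, rfl⟩ := hvt v u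
  exact ⟨(g a, g b), ⟨g.map_adj_iff.mpr ha, g.map_adj_iff.mpr hb⟩, pairType_map g a b⟩

theorem surjOn_pairType_neighborSet (hconn : Γ.Connected) (hvt : VertexTrans Γ G)
    (hnc : Γ ≠ ⊤) (hgirth : Γ.girth = 3) (u : V) :
    Set.SurjOn (pairType Γ) (Γ.neighborSet u ×ˢ Γ.neighborSet u) Set.univ := by
  obtain ⟨a, b, c, hab, hac, hbc⟩ := exists_triangle_of_girth_eq_three hgirth
  obtain ⟨v, x, y, hvx, hvy, hxy, hnxy⟩ := hconn.exists_adj_adj_not_adj_of_ne_top hnc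
  intro k _
  have hk : k = pairType Γ (b, b) ∨ k = pairType Γ (b, c) ∨ k = pairType Γ (x, y) := by
    rw [pairType_self, pairType_of_adj hbc, pairType_of_not_adj hxy hnxy]
    fin_cases k <;> simp
  rcases hk with rfl | rfl | rfl
  exacts [hvt.exists_pairType_eq hab hab u, hvt.exists_pairType_eq hab hac u,
    hvt.exists_pairType_eq hvx hvy u]

end

/-- **Lemma 3.1.** Let `Γ` be a finite connected `G`-vertex-transitive non-complete
graph of girth 3.  Then `Γ` is `(G,3)`-CH iff for each vertex `v` the stabiliser
`G_v` induces on `Γ(v)` a transitive permutation group of rank 3. -/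
theorem ch3_iff_locally_rank3 {V : Type*} [Fintype V]
    (Γ : SimpleGraph V) (G : Subgroup (Γ ≃g Γ))
    (hconn : Γ.Connected) (hvt : VertexTrans Γ G)
    (hnc : Γ ≠ ⊤) (hgirth : Γ.girth = 3) :
    IsCH3 Γ G ↔ ∀ v : V, StabRank3 Γ G v := by
  rw [isCH3_iff_forall_stabPairTypeTrans hvt]
  exact forall_congr' fun u =>
    (stabRank3_iff_stabPairTypeTrans (surjOn_pairType_neighborSet hconn hvt hnc hgirth u)).symm
end

section
/- If Γ is a (G,3)-CH graph of girth 3 which is not complete, then for a vertex u the induced subgraph on Γ(u) is vertex-transitive and edge-transitive under G_u, and G_u acts transitively on the set of pairs of distinct non-adjacent vertices of Γ(u). -/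
open SimpleGraph

variable {V : Type*}

/-! Each of the three transitivity properties is an instance of `(G,3)`-homogeneity applied to
the star induced on `{u, v, w}` for neighbours `v, w` of `u`: it is connected through `u`, and
`u ↦ u, v ↦ v', w ↦ w'` is an isomorphism onto the star on `{u, v', w'}` exactly when it
respects equality and adjacency of the two leaves. -/

lemma SimpleGraph.induce_triple_connected_of_adj {Γ : SimpleGraph V} {u v w : V}
    (hv : Γ.Adj u v) (hw : Γ.Adj u w) : (Γ.induce {u, v, w}).Connected := by
  have hunion : ({u, v, w} : Set V) = {u, v} ∪ {u, w} := by ext; simp; tauto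
  rw [hunion]
  exact induce_union_connected (induce_pair_connected_of_adj hv).preconnected
    (induce_pair_connected_of_adj hw).preconnected ⟨u, by simp⟩

namespace IsCH3

variable {Γ : SimpleGraph V} {G : Subgroup (Γ ≃g Γ)}

theorem exists_eqOn_of_injOn (hCH : IsCH3 Γ G) {A : Set V} {f : V → V} (hA : A.ncard ≤ 3)
    (hconn : (Γ.induce A).Connected) (hinj : Set.InjOn f A)
    (hadj : ∀ x ∈ A, ∀ y ∈ A, Γ.Adj (f x) (f y) ↔ Γ.Adj x y) :
    ∃ g ∈ G, Set.EqOn g f A := by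
  let φ : Γ.induce A ≃g Γ.induce (f '' A) :=
    { toEquiv := Equiv.Set.imageOfInjOn f A hinj
      map_rel_iff' := fun {a b} => hadj a a.2 b b.2 }
  obtain ⟨g, hg, hφ⟩ := hCH A _ hA hconn φ
  exact ⟨g, hg, fun a ha => hφ ⟨a, ha⟩⟩

theorem exists_fix_and_map_pair_of_adj (hCH : IsCH3 Γ G) {u v w v' w' : V}
    (hv : Γ.Adj u v) (hw : Γ.Adj u w) (hv' : Γ.Adj u v') (hw' : Γ.Adj u w')
    (heq : v = w ↔ v' = w') (hadj : Γ.Adj v w ↔ Γ.Adj v' w') :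
    ∃ g ∈ G, (g : Γ ≃g Γ) u = u ∧ (g : Γ ≃g Γ) v = v' ∧ (g : Γ ≃g Γ) w = w' := by
  classical
  let f : V → V := fun x => if x = u then u else if x = v then v' else w'
  have fu : f u = u := if_pos rfl
  have fv : f v = v' := by simp [f, hv.ne']
  have fw : f w = w' := by
    by_cases h : w = v
    · subst h; simpa [f, hv.ne'] using heq.mp rfl
    · simp [f, hw.ne', h]
  have hcard : ({u, v, w} : Set V).ncard ≤ 3 :=
    (Set.ncard_insert_le _ _).trans (by grw [Set.ncard_insert_le]; simp)
  have hinj : Set.InjOn f {u, v, w} := by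
    simp only [Set.InjOn, Set.mem_insert_iff, Set.mem_singleton_iff, forall_eq_or_imp, forall_eq,
      fu, fv, fw]
    grind [hv.ne, hw.ne, hv'.ne, hw'.ne]
  have hiso : ∀ x ∈ ({u, v, w} : Set V), ∀ y ∈ ({u, v, w} : Set V),
      Γ.Adj (f x) (f y) ↔ Γ.Adj x y := by
    simp only [Set.mem_insert_iff, Set.mem_singleton_iff, forall_eq_or_imp, forall_eq,
      fu, fv, fw]
    grind [hv.symm, hw.symm, hv'.symm, hw'.symm, Γ.adj_comm, Γ.irrefl]
  obtain ⟨g, hg, hgf⟩ :=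
    hCH.exists_eqOn_of_injOn hcard (induce_triple_connected_of_adj hv hw) hinj hiso
  exact ⟨g, hg, (hgf (by simp)).trans fu, (hgf (by simp)).trans fv, (hgf (by simp)).trans fw⟩

end IsCH3

theorem stab_trans_on_arcs_and_nonedges_general {V : Type*}
    (Γ : SimpleGraph V) (G : Subgroup (Γ ≃g Γ))
    (hCH : IsCH3 Γ G) :
    ∀ u : V,
      StabTrans Γ G u ∧
      (∀ v w v' w', v ∈ Γ.neighborSet u → w ∈ Γ.neighborSet u →
        v' ∈ Γ.neighborSet u → w' ∈ Γ.neighborSet u →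
        Γ.Adj v w → Γ.Adj v' w' →
        ∃ g ∈ G, (g : Γ ≃g Γ) u = u ∧ (g : Γ ≃g Γ) v = v' ∧ (g : Γ ≃g Γ) w = w') ∧
      (∀ v w v' w', v ∈ Γ.neighborSet u → w ∈ Γ.neighborSet u →
        v' ∈ Γ.neighborSet u → w' ∈ Γ.neighborSet u →
        v ≠ w → v' ≠ w' → ¬ Γ.Adj v w → ¬ Γ.Adj v' w' →
        ∃ g ∈ G, (g : Γ ≃g Γ) u = u ∧ (g : Γ ≃g Γ) v = v' ∧ (g : Γ ≃g Γ) w = w') := by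
  intro u
  refine ⟨fun v hv w hw => ?vertices, fun v w v' w' hv hw hv' hw' hvw hvw' => ?arcs,
    fun v w v' w' hv hw hv' hw' hne hne' hvw hvw' => ?nonedges⟩
  case vertices =>
    obtain ⟨g, hg, hu, hvw, -⟩ := hCH.exists_fix_and_map_pair_of_adj hv hv hw hw
      (iff_of_true rfl rfl) (iff_of_false Γ.irrefl Γ.irrefl)
    exact ⟨g, hg, hu, hvw⟩
  case arcs =>
    exact hCH.exists_fix_and_map_pair_of_adj hv hw hv' hw'
      (iff_of_false hvw.ne hvw'.ne) (iff_of_true hvw hvw')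
  case nonedges =>
    exact hCH.exists_fix_and_map_pair_of_adj hv hw hv' hw'
      (iff_of_false hne hne') (iff_of_false hvw hvw')

/-- If `Γ` is a `(G,3)`-CH graph of girth 3 which is not complete, then for every
vertex `u` the stabiliser `G_u` is transitive on `Γ(u)`, transitive on the arcs of
the induced subgraph on `Γ(u)`, and transitive on the pairs of distinct
non-adjacent vertices of `Γ(u)`. -/
theorem stab_trans_on_arcs_and_nonedges {V : Type*} [Fintype V]
    (Γ : SimpleGraph V) (G : Subgroup (Γ ≃g Γ))
    (hconn : Γ.Connected) (hCH : IsCH3 Γ G)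
    (hgirth : Γ.girth = 3) (hnc : Γ ≠ ⊤) :
    ∀ u : V,
      StabTrans Γ G u ∧
      (∀ v w v' w', v ∈ Γ.neighborSet u → w ∈ Γ.neighborSet u →
        v' ∈ Γ.neighborSet u → w' ∈ Γ.neighborSet u →
        Γ.Adj v w → Γ.Adj v' w' →
        ∃ g ∈ G, (g : Γ ≃g Γ) u = u ∧ (g : Γ ≃g Γ) v = v' ∧ (g : Γ ≃g Γ) w = w') ∧
      (∀ v w v' w', v ∈ Γ.neighborSet u → w ∈ Γ.neighborSet u →
        v' ∈ Γ.neighborSet u → w' ∈ Γ.neighborSet u →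
        v ≠ w → v' ≠ w' → ¬ Γ.Adj v w → ¬ Γ.Adj v' w' →
        ∃ g ∈ G, (g : Γ ≃g Γ) u = u ∧ (g : Γ ≃g Γ) v = v' ∧ (g : Γ ≃g Γ) w = w') :=
  stab_trans_on_arcs_and_nonedges_general Γ G hCH
end

section
/- Let Γ be a (G,3)-CH graph of girth 3, not complete and not complete multipartite, and let u be a vertex. If the induced subgraph [Γ(u)] is disconnected, then every connected component of [Γ(u)] is a complete graph, so [Γ(u)] ≅ rK_ℓ for some integers r, ℓ. -/
/-!
The stabiliser of `u` in `G` acts on the local graph `[Γ(u)]`. By `(G,3)`-homogeneity it is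
transitive on `Γ(u)`, and for `x ∈ Γ(u)` the stabiliser of `x` in it is transitive on the
non-neighbours of `x` in `Γ(u)`, because the induced paths `x ~ u ~ y` and `x ~ u ~ w` are
isomorphic. If `x ~ z ~ y` in `[Γ(u)]` with `x ≁ y`, pick `w` in another component: an
automorphism fixing `x` and sending `y` to `w` would move `w` into the component of `x`.
So components are cliques, and transitivity makes them all the same size.
-/

open SimpleGraph

variable {V : Type*}

namespace SimpleGraph

variable {W : Type*} {H : SimpleGraph W}

lemma Reachable.adj_of_ne (htrans : ∀ x z y, H.Adj x z → H.Adj z y → x ≠ y → H.Adj x y)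
    {a b : W} (hab : H.Reachable a b) (hne : a ≠ b) : H.Adj a b := by
  obtain ⟨p⟩ := hab
  induction p with
  | nil => exact absurd rfl hne
  | @cons x y z hxy _ ih =>
    rcases eq_or_ne y z with rfl | hyz
    · exact hxy
    · exact htrans x y z hxy (ih hyz) hne

lemma adj_of_adj_of_adj_of_not_connected (hdisc : ¬ H.Connected)
    (hmove : ∀ x y w, x ≠ y → ¬ H.Adj x y → x ≠ w → ¬ H.Adj x w →
      ∃ ψ : H ≃g H, ψ x = x ∧ ψ y = w)
    (x z y : W) (hxz : H.Adj x z) (hzy : H.Adj z y) (hxy : x ≠ y) : H.Adj x y := by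
  by_contra hnxy
  have hreach : H.Reachable x y := hxz.reachable.trans hzy.reachable
  obtain ⟨w, hw⟩ : ∃ w, ¬ H.Reachable x w := by
    by_contra! h
    have : Nonempty W := ⟨x⟩
    exact hdisc ⟨fun a b => (h a).symm.trans (h b)⟩
  obtain ⟨ψ, hψx, hψy⟩ := hmove x y w hxy hnxy (by rintro rfl; exact hw .rfl)
    (fun h => hw h.reachable)
  exact hw (by simpa [hψx, hψy] using hreach.map ψ.toHom)

lemma exists_forall_card_supp_eq (htrans : ∀ v w : W, ∃ ψ : H ≃g H, ψ v = w) :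
    ∃ ℓ, ∀ c : H.ConnectedComponent, Nat.card c.supp = ℓ := by
  rcases isEmpty_or_nonempty W with hW | ⟨⟨v⟩⟩
  · exact ⟨0, fun c => c.ind fun w => isEmptyElim w⟩
  refine ⟨Nat.card (H.connectedComponentMk v).supp, fun c => c.ind fun w => ?_⟩
  obtain ⟨ψ, rfl⟩ := htrans v w
  exact (Nat.card_congr (Equiv.subtypeEquiv ψ.toEquiv fun s => by
    simpa using (Iso.reachable_iff (φ := ψ)).symm)).symm

lemma nonempty_iso_cliquesGraph_of_equiv {r ℓ : ℕ} (e : W ≃ Fin r × Fin ℓ)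
    (he : ∀ a b, (e a).1 = (e b).1 ↔ H.Reachable a b)
    (hadj : ∀ a b, H.Reachable a b → a ≠ b → H.Adj a b) :
    Nonempty (H ≃g cliquesGraph r ℓ) := by
  refine ⟨⟨e, fun {a b} => ?_⟩⟩
  change (e a).1 = (e b).1 ∧ (e a).2 ≠ (e b).2 ↔ H.Adj a b
  rw [he]
  refine ⟨fun ⟨hr, hne⟩ => hadj a b hr ?_, fun h => ⟨h.reachable, fun h2 => h.ne ?_⟩⟩
  · rintro rfl; exact hne rfl
  · exact e.injective (Prod.ext ((he a b).2 h.reachable) h2)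

lemma nonempty_iso_cliquesGraph [Finite W] (hadj : ∀ a b, H.Reachable a b → a ≠ b → H.Adj a b)
    {ℓ : ℕ} (hℓ : ∀ c : H.ConnectedComponent, Nat.card c.supp = ℓ) :
    Nonempty (H ≃g cliquesGraph (Nat.card H.ConnectedComponent) ℓ) := by
  let e : W ≃ Fin (Nat.card H.ConnectedComponent) × Fin ℓ :=
    (Equiv.sigmaFiberEquiv H.connectedComponentMk).symm.trans <|
      (Equiv.sigmaCongrRight fun c => Finite.equivFinOfCardEq (hℓ c)).trans <|
        (Equiv.sigmaEquivProd _ _).trans <| Equiv.prodCongr (Finite.equivFin _) (.refl _)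
  refine nonempty_iso_cliquesGraph_of_equiv e (fun a b => ?_) hadj
  exact (Finite.equivFin _).injective.eq_iff.trans ConnectedComponent.eq

end SimpleGraph

section CH

variable {Γ : SimpleGraph V} {G : Subgroup (Γ ≃g Γ)}

lemma SimpleGraph.Iso.bijOn_neighborSet (g : Γ ≃g Γ) {u : V} (hg : g u = u) :
    Set.BijOn g (Γ.neighborSet u) (Γ.neighborSet u) := by
  simpa [g.image_neighborSet, hg] using g.injective.injOn.bijOn_image (s := Γ.neighborSet u)

def SimpleGraph.induceIsoImage (σ : V ≃ V) (A : Set V)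
    (hσ : ∀ a ∈ A, ∀ b ∈ A, Γ.Adj (σ a) (σ b) ↔ Γ.Adj a b) :
    Γ.induce A ≃g Γ.induce (σ '' A) :=
  ⟨σ.image A, fun {a b} => hσ a a.2 b b.2⟩

lemma SimpleGraph.connected_induce_of_forall_adj {A : Set V} {u : V} (hu : u ∈ A)
    (hadj : ∀ a ∈ A, a ≠ u → Γ.Adj u a) : (Γ.induce A).Connected := by
  rw [connected_iff_exists_forall_reachable]
  refine ⟨⟨u, hu⟩, fun ⟨a, ha⟩ => ?_⟩
  rcases eq_or_ne a u with rfl | hau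
  · rfl
  · exact Adj.reachable (hadj a ha hau)

lemma IsCH3.exists_eqOn (hCH : IsCH3 Γ G) {A : Set V} (hA : A.ncard ≤ 3)
    (hconn : (Γ.induce A).Connected) (σ : V ≃ V)
    (hσ : ∀ a ∈ A, ∀ b ∈ A, Γ.Adj (σ a) (σ b) ↔ Γ.Adj a b) :
    ∃ g ∈ G, Set.EqOn g σ A := by
  obtain ⟨g, hgG, hg⟩ := hCH A _ hA hconn (induceIsoImage σ A hσ)
  exact ⟨g, hgG, fun a ha => hg ⟨a, ha⟩⟩

/-- Extends the transposition of `v` and `w`, which fixes `u` and `x` and preserves adjacency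
on `{x, u, v}`. -/
lemma IsCH3.exists_fix_fix_map (hCH : IsCH3 Γ G) {u x v w : V} (hx : x = u ∨ Γ.Adj u x)
    (hv : Γ.Adj u v) (hw : Γ.Adj u w) (hxv : x ≠ v) (hxw : x ≠ w)
    (hadj : Γ.Adj x v ↔ Γ.Adj x w) :
    ∃ g ∈ G, g u = u ∧ g x = x ∧ g v = w := by
  classical
  have hσu : Equiv.swap v w u = u := Equiv.swap_apply_of_ne_of_ne hv.ne hw.ne
  have hσx : Equiv.swap v w x = x := Equiv.swap_apply_of_ne_of_ne hxv hxw
  have hσv : Equiv.swap v w v = w := Equiv.swap_apply_left v w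
  have hconn : (Γ.induce {x, u, v}).Connected := by
    refine connected_induce_of_forall_adj (u := u) (by simp) ?_
    simp only [Set.mem_insert_iff, Set.mem_singleton_iff, forall_eq_or_imp, forall_eq]
    exact ⟨hx.resolve_left, fun h => absurd rfl h, fun _ => hv⟩
  have hcard : ({x, u, v} : Set V).ncard ≤ 3 :=
    (Set.ncard_insert_le _ _).trans (by grw [Set.ncard_insert_le, Set.ncard_singleton])
  obtain ⟨g, hgG, hg⟩ := hCH.exists_eqOn hcard hconn (Equiv.swap v w) (by
    simp only [Set.mem_insert_iff, Set.mem_singleton_iff, forall_eq_or_imp, forall_eq,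
      hσu, hσx, hσv]
    simp [hv, hw, hv.symm, hw.symm, Γ.adj_comm w x, Γ.adj_comm v x, hadj])
  exact ⟨g, hgG, (hg (by simp)).trans hσu, (hg (by simp)).trans hσx, (hg (by simp)).trans hσv⟩

lemma IsCH3.stabTrans (hCH : IsCH3 Γ G) (u : V) : StabTrans Γ G u := fun v hv w hw => by
  obtain ⟨g, hgG, hgu, -, hgv⟩ :=
    hCH.exists_fix_fix_map (.inl rfl) hv hw hv.ne hw.ne (iff_of_true hv hw)
  exact ⟨g, hgG, hgu, hgv⟩

lemma IsCH3.exists_iso_induce_neighborSet_apply_eq (hCH : IsCH3 Γ G) (u : V)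
    (v w : Γ.neighborSet u) :
    ∃ ψ : Γ.induce (Γ.neighborSet u) ≃g Γ.induce (Γ.neighborSet u), ψ v = w := by
  obtain ⟨g, -, hgu, hgv⟩ := hCH.stabTrans u v v.2 w w.2
  exact ⟨g.induce (g.bijOn_neighborSet hgu), Subtype.ext hgv⟩

lemma IsCH3.exists_iso_induce_neighborSet_fix_apply_eq (hCH : IsCH3 Γ G) (u : V)
    (x y w : Γ.neighborSet u) (hxy : x ≠ y) (hnxy : ¬ (Γ.induce (Γ.neighborSet u)).Adj x y)
    (hxw : x ≠ w) (hnxw : ¬ (Γ.induce (Γ.neighborSet u)).Adj x w) :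
    ∃ ψ : Γ.induce (Γ.neighborSet u) ≃g Γ.induce (Γ.neighborSet u), ψ x = x ∧ ψ y = w := by
  obtain ⟨g, -, hgu, hgx, hgy⟩ := hCH.exists_fix_fix_map (.inr x.2) y.2 w.2
    (Subtype.val_injective.ne hxy) (Subtype.val_injective.ne hxw) (iff_of_false hnxy hnxw)
  exact ⟨g.induce (g.bijOn_neighborSet hgu), Subtype.ext hgx, Subtype.ext hgy⟩

end CH

theorem local_disconnected_is_cliques_general {V : Type*} [Fintype V]
    (Γ : SimpleGraph V) (G : Subgroup (Γ ≃g Γ))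
    (hCH : IsCH3 Γ G)
    (u : V) (hdisc : ¬ (SimpleGraph.induce (Γ.neighborSet u) Γ).Connected) :
    (∀ a b : Γ.neighborSet u,
      (SimpleGraph.induce (Γ.neighborSet u) Γ).Reachable a b → a ≠ b →
        (SimpleGraph.induce (Γ.neighborSet u) Γ).Adj a b) ∧
    ∃ r ℓ : ℕ,
      Nonempty ((SimpleGraph.induce (Γ.neighborSet u) Γ) ≃g cliquesGraph r ℓ) := by
  have hclique : ∀ a b : Γ.neighborSet u,
      (Γ.induce (Γ.neighborSet u)).Reachable a b → a ≠ b → (Γ.induce (Γ.neighborSet u)).Adj a b :=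
    fun _ _ hab => hab.adj_of_ne <| adj_of_adj_of_adj_of_not_connected hdisc <|
      hCH.exists_iso_induce_neighborSet_fix_apply_eq u
  obtain ⟨ℓ, hℓ⟩ := exists_forall_card_supp_eq (hCH.exists_iso_induce_neighborSet_apply_eq u)
  exact ⟨hclique, _, ℓ, nonempty_iso_cliquesGraph hclique hℓ⟩

/-- If `Γ` is a `(G,3)`-CH graph of girth 3, neither complete nor complete
multipartite, and the induced subgraph on the neighbourhood `Γ(u)` of a vertex `u`
is disconnected, then every connected component of `[Γ(u)]` is a complete graph,
and `[Γ(u)] ≅ rKℓ` for some integers `r, ℓ`. -/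
theorem local_disconnected_is_cliques {V : Type*} [Fintype V]
    (Γ : SimpleGraph V) (G : Subgroup (Γ ≃g Γ))
    (hconn : Γ.Connected) (hvt : VertexTrans Γ G) (hCH : IsCH3 Γ G)
    (hgirth : Γ.girth = 3) (hnc : Γ ≠ ⊤) (hncm : ¬ _root_.IsCompleteMultipartite Γ)
    (u : V) (hdisc : ¬ (SimpleGraph.induce (Γ.neighborSet u) Γ).Connected) :
    (∀ a b : Γ.neighborSet u,
      (SimpleGraph.induce (Γ.neighborSet u) Γ).Reachable a b → a ≠ b →
        (SimpleGraph.induce (Γ.neighborSet u) Γ).Adj a b) ∧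
    ∃ r ℓ : ℕ,
      Nonempty ((SimpleGraph.induce (Γ.neighborSet u) Γ) ≃g cliquesGraph r ℓ) :=
  local_disconnected_is_cliques_general Γ G hCH u hdisc
end

section
/- Let Γ be a connected (G,3)-CH graph which is not complete multipartite, and let N ⊴ G have at least three orbits on the vertex set. Then for every edge {u,v} of Γ, the N-orbit of v meets the neighbourhood Γ(u) in exactly the single vertex v; consequently Γ is a cover of the quotient graph Γ_N and N is semiregular on the vertices. -/
open SimpleGraph

variable {V : Type*}

variable {V : Type*}

/-- The partition of the vertex set into `N`-orbits. -/
def orbSetoid {Γ : SimpleGraph V} (N : Subgroup (Γ ≃g Γ)) : Setoid V where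
  r v w := ∃ n ∈ N, (n : Γ ≃g Γ) v = w
  iseqv := by
    refine ⟨fun v => ⟨1, N.one_mem, rfl⟩, ?_, ?_⟩
    · rintro v w ⟨n, hn, h⟩
      exact ⟨n⁻¹, N.inv_mem hn, by subst h; exact n.symm_apply_apply v⟩
    · rintro u v w ⟨n, hn, h⟩ ⟨m, hm, h'⟩
      exact ⟨m * n, N.mul_mem hm hn, by simp only [← h', ← h]; rfl⟩

/-- The quotient graph `Γ_N` of `Γ` with respect to the orbits of `N`. -/
def quotGraph (Γ : SimpleGraph V) (N : Subgroup (Γ ≃g Γ)) :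
    SimpleGraph (Quotient (orbSetoid N)) where
  Adj B C := B ≠ C ∧ ∃ u v : V, Γ.Adj u v ∧ Quotient.mk _ u = B ∧ Quotient.mk _ v = C
  symm := ⟨by rintro B C ⟨h, u, v, ha, hu, hv⟩; exact ⟨h.symm, v, u, ha.symm, hv, hu⟩⟩
  loopless := ⟨fun B h => h.1 rfl⟩


/-!
An edge inside an `N`-orbit would, by arc-transitivity and normality of `N`, put every edge and
hence every vertex into one orbit. So suppose `u` has distinct neighbours `v, w` in one orbit:
they are non-adjacent, and transitivity of `G` on induced 2-paths puts the ends of every induced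
2-path into one orbit. If every neighbourhood lies in a single orbit, the orbits alternate along
edges and there are only two of them. Otherwise every arc `(a, x)` has a second neighbour of `a`
outside the orbit of `x`; this yields a common neighbour of the ends of any path `x a b y`, so
`Γ` has diameter at most 2, adjacency means lying in different orbits, and `Γ` is complete
multipartite. Semiregularity and the covering property follow from the injectivity of the orbit
map on neighbourhoods.
-/

section CH3

variable {Γ : SimpleGraph V} {G : Subgroup (Γ ≃g Γ)}

theorem IsCH3.exists_apply_eq {k : ℕ} (hCH : IsCH3 Γ G) (hk : k ≤ 3) {p q : Fin k → V}
    (hp : p.Injective) (hq : q.Injective) (hadj : ∀ i j, Γ.Adj (q i) (q j) ↔ Γ.Adj (p i) (p j))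
    (hconn : (Γ.induce (Set.range p)).Connected) :
    ∃ g ∈ G, ∀ i, (g : Γ ≃g Γ) (p i) = q i := by
  let e : Set.range p ≃ Set.range q :=
    (Equiv.ofInjective p hp).symm.trans (Equiv.ofInjective q hq)
  have he : ∀ i, (e ⟨p i, i, rfl⟩ : V) = q i := fun i => by simp [e]
  let φ : Γ.induce (Set.range p) ≃g Γ.induce (Set.range q) :=
    { e with
      map_rel_iff' := by
        rintro ⟨_, i, rfl⟩ ⟨_, j, rfl⟩
        simp [he, hadj] }
  have hcard : (Set.range p).ncard ≤ 3 := by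
    rwa [Set.ncard_range_of_injective hp, Nat.card_fin]
  obtain ⟨g, hg, hgp⟩ := hCH _ _ hcard hconn φ
  exact ⟨g, hg, fun i => (hgp ⟨p i, i, rfl⟩).trans (he i)⟩

theorem IsCH3.exists_map_adj (hCH : IsCH3 Γ G) {a b a' b' : V} (h : Γ.Adj a b)
    (h' : Γ.Adj a' b') : ∃ g ∈ G, (g : Γ ≃g Γ) a = a' ∧ (g : Γ ≃g Γ) b = b' := by
  have hp : (![a, b]).Injective := by
    intro i j; fin_cases i <;> fin_cases j <;> simp [h.ne, h.ne']
  have hq : (![a', b']).Injective := by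
    intro i j; fin_cases i <;> fin_cases j <;> simp [h'.ne, h'.ne']
  obtain ⟨g, hg, hgp⟩ := hCH.exists_apply_eq (by norm_num) hp hq
    (by simp [Fin.forall_fin_two, h, h', h.symm, h'.symm])
    (by rw [Matrix.range_cons_cons_empty]; exact induce_pair_connected_of_adj h)
  exact ⟨g, hg, hgp 0, hgp 1⟩

theorem IsCH3.exists_map_induced_path (hCH : IsCH3 Γ G) {a b c a' b' c' : V}
    (hba : Γ.Adj b a) (hbc : Γ.Adj b c) (hac : a ≠ c) (hnac : ¬Γ.Adj a c)
    (hba' : Γ.Adj b' a') (hbc' : Γ.Adj b' c') (hac' : a' ≠ c') (hnac' : ¬Γ.Adj a' c') :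
    ∃ g ∈ G, (g : Γ ≃g Γ) a = a' ∧ (g : Γ ≃g Γ) b = b' ∧ (g : Γ ≃g Γ) c = c' := by
  have hp : (![b, a, c]).Injective := by
    intro i j
    fin_cases i <;> fin_cases j <;> simp [hba.ne, hbc.ne, hac, hba.ne', hbc.ne', hac.symm]
  have hq : (![b', a', c']).Injective := by
    intro i j
    fin_cases i <;> fin_cases j <;> simp [hba'.ne, hbc'.ne, hac', hba'.ne', hbc'.ne', hac'.symm]
  have hconn : (Γ.induce (Set.range ![b, a, c])).Connected := by
    have := induce_union_connected (induce_pair_connected_of_adj hba).preconnected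
      (induce_pair_connected_of_adj hbc).preconnected ⟨b, by simp⟩
    have hrange : Set.range ![b, a, c] = {b, a} ∪ {b, c} := by ext; simp; tauto
    rwa [hrange]
  obtain ⟨g, hg, hgp⟩ := hCH.exists_apply_eq (by norm_num) hp hq
    (by simp [Fin.forall_fin_succ, hba, hbc, hba', hbc', hba.symm, hbc.symm, hba'.symm,
      hbc'.symm, hnac, hnac', Γ.adj_comm c a, Γ.adj_comm c' a'])
    hconn
  exact ⟨g, hg, hgp 1, hgp 0, hgp 2⟩

end CH3

theorem SimpleGraph.Connected.forall_of_adj {Γ : SimpleGraph V} {P : V → Prop}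
    (hconn : Γ.Connected) {v : V} (hv : P v) (hstep : ∀ ⦃x y⦄, Γ.Adj x y → P x → P y)
    (w : V) : P w := by
  obtain ⟨p⟩ := hconn.preconnected v w
  induction p with
  | nil => exact hv
  | cons hadj _ ih => exact ih (hstep hadj hv)

section Partition

variable {Γ : SimpleGraph V} {s : Setoid V}

theorem adj_of_adj_of_adj_of_not_rel
    (hpath : ∀ ⦃a b c⦄, Γ.Adj b a → Γ.Adj b c → a ≠ c → ¬Γ.Adj a c → s a c)
    {a b c : V} (hba : Γ.Adj b a) (hbc : Γ.Adj b c) (hac : ¬s a c) : Γ.Adj a c := by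
  by_contra hnac
  exact hac (hpath hba hbc (fun h => hac (h ▸ s.refl' a)) hnac)

theorem exists_adj_adj_of_adj_of_adj_of_adj (hsep : ∀ ⦃a b⦄, Γ.Adj a b → ¬s a b)
    (hpath : ∀ ⦃a b c⦄, Γ.Adj b a → Γ.Adj b c → a ≠ c → ¬Γ.Adj a c → s a c)
    (hsplit : ∀ ⦃a x⦄, Γ.Adj a x → ∃ c, Γ.Adj a c ∧ ¬s c x)
    {x a b y : V} (hxa : Γ.Adj x a) (hab : Γ.Adj a b) (hby : Γ.Adj b y) :
    ∃ c, Γ.Adj x c ∧ Γ.Adj c y := by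
  by_cases hxb : s x b
  · by_cases hay : s a y
    · obtain ⟨c, hac, hcx⟩ := hsplit hxa.symm
      have hcb : ¬s c b := fun h => hcx (s.trans' h (s.symm' hxb))
      have hcy : ¬s c y := fun h => hsep hac (s.symm' (s.trans' h (s.symm' hay)))
      have hbc := (adj_of_adj_of_adj_of_not_rel hpath hac hab hcb).symm
      exact ⟨c, (adj_of_adj_of_adj_of_not_rel hpath hac hxa.symm hcx).symm,
        adj_of_adj_of_adj_of_not_rel hpath hbc hby hcy⟩
    · exact ⟨a, hxa, adj_of_adj_of_adj_of_not_rel hpath hab.symm hby hay⟩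
  · exact ⟨b, adj_of_adj_of_adj_of_not_rel hpath hxa.symm hab hxb, hby⟩

theorem adj_iff_not_rel (hconn : Γ.Connected) (hsep : ∀ ⦃a b⦄, Γ.Adj a b → ¬s a b)
    (hpath : ∀ ⦃a b c⦄, Γ.Adj b a → Γ.Adj b c → a ≠ c → ¬Γ.Adj a c → s a c)
    (hsplit : ∀ ⦃a x⦄, Γ.Adj a x → ∃ c, Γ.Adj a c ∧ ¬s c x) (x y : V) :
    Γ.Adj x y ↔ ¬s x y := by
  refine ⟨fun h => hsep h, fun hxy => ?_⟩
  have hdiam : x = y ∨ Γ.Adj x y ∨ ∃ c, Γ.Adj x c ∧ Γ.Adj c y := by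
    refine hconn.forall_of_adj (P := fun x => x = y ∨ Γ.Adj x y ∨ ∃ c, Γ.Adj x c ∧ Γ.Adj c y)
      (Or.inl rfl) (fun x' x hx'x hx' => ?_) x
    rcases hx' with rfl | hx'y | ⟨c, hx'c, hcy⟩
    · exact Or.inr (Or.inl hx'x.symm)
    · exact Or.inr (Or.inr ⟨x', hx'x.symm, hx'y⟩)
    · exact Or.inr (Or.inr
        (exists_adj_adj_of_adj_of_adj_of_adj hsep hpath hsplit hx'x.symm hx'c hcy))
  rcases hdiam with rfl | hadj | ⟨c, hxc, hcy⟩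
  · exact absurd (s.refl' x) hxy
  · exact hadj
  · exact adj_of_adj_of_adj_of_not_rel hpath hxc.symm hcy hxy

theorem isCompleteMultipartite_of_exists_adj_not_rel (hconn : Γ.Connected)
    (hsep : ∀ ⦃a b⦄, Γ.Adj a b → ¬s a b)
    (hpath : ∀ ⦃a b c⦄, Γ.Adj b a → Γ.Adj b c → a ≠ c → ¬Γ.Adj a c → s a c)
    (hsplit : ∀ ⦃a x⦄, Γ.Adj a x → ∃ c, Γ.Adj a c ∧ ¬s c x) :
    _root_.IsCompleteMultipartite Γ := by
  intro x y z hxy hyz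
  simp only [adj_iff_not_rel hconn hsep hpath hsplit, not_not] at hxy hyz ⊢
  exact s.trans' hxy hyz

theorem not_three_classes_of_forall_rel_or_rel {u v : V} (h : ∀ x, s x u ∨ s x v) :
    ¬∃ v₁ v₂ v₃ : V, ¬s v₁ v₂ ∧ ¬s v₁ v₃ ∧ ¬s v₂ v₃ := by
  rintro ⟨v₁, v₂, v₃, h₁₂, h₁₃, h₂₃⟩
  rcases h v₁ with h₁ | h₁ <;> rcases h v₂ with h₂ | h₂ <;> rcases h v₃ with h₃ | h₃ <;>
    first
    | exact h₁₂ (s.trans' h₁ (s.symm' h₂))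
    | exact h₁₃ (s.trans' h₁ (s.symm' h₃))
    | exact h₂₃ (s.trans' h₂ (s.symm' h₃))

end Partition

section Orbits

variable {Γ : SimpleGraph V} {G N : Subgroup (Γ ≃g Γ)}

theorem orbSetoid_apply_of_mem {n : Γ ≃g Γ} (hn : n ∈ N) (x : V) :
    orbSetoid N x (n x) :=
  ⟨n, hn, rfl⟩

theorem orbSetoid_map (hnormal : ∀ g ∈ G, ∀ n ∈ N, g * n * g⁻¹ ∈ N) {g : Γ ≃g Γ}
    (hg : g ∈ G) {x y : V} (h : orbSetoid N x y) : orbSetoid N (g x) (g y) := by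
  obtain ⟨n, hn, rfl⟩ := h
  refine ⟨g * n * g⁻¹, hnormal g hg n hn, ?_⟩
  simp [RelIso.mul_apply]

theorem not_orbSetoid_of_adj (hconn : Γ.Connected) (hCH : IsCH3 Γ G)
    (hnormal : ∀ g ∈ G, ∀ n ∈ N, g * n * g⁻¹ ∈ N) (htwo : ∃ x y : V, ¬orbSetoid N x y)
    ⦃a b : V⦄ (hab : Γ.Adj a b) : ¬orbSetoid N a b := by
  intro hrel
  have hedge : ∀ ⦃x y⦄, Γ.Adj x y → orbSetoid N x y := fun x y hxy => by
    obtain ⟨g, hg, rfl, rfl⟩ := hCH.exists_map_adj hab hxy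
    exact orbSetoid_map hnormal hg hrel
  obtain ⟨x, y, hxy⟩ := htwo
  exact hxy (hconn.forall_of_adj ((orbSetoid N).refl' x)
    (fun _ _ h hx => (orbSetoid N).trans' hx (hedge h)) y)

theorem orbSetoid_of_induced_path (hCH : IsCH3 Γ G)
    (hnormal : ∀ g ∈ G, ∀ n ∈ N, g * n * g⁻¹ ∈ N) {u v w : V} (huv : Γ.Adj u v)
    (huw : Γ.Adj u w) (hvw : v ≠ w) (hnvw : ¬Γ.Adj v w) (hrel : orbSetoid N v w)
    ⦃a b c : V⦄ (hba : Γ.Adj b a) (hbc : Γ.Adj b c) (hac : a ≠ c) (hnac : ¬Γ.Adj a c) :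
    orbSetoid N a c := by
  obtain ⟨g, hg, rfl, -, rfl⟩ := hCH.exists_map_induced_path huv huw hvw hnvw hba hbc hac hnac
  exact orbSetoid_map hnormal hg hrel

theorem exists_adj_not_orbSetoid (hCH : IsCH3 Γ G)
    (hnormal : ∀ g ∈ G, ∀ n ∈ N, g * n * g⁻¹ ∈ N) {y c₁ c₂ : V} (h₁ : Γ.Adj y c₁)
    (h₂ : Γ.Adj y c₂) (h₁₂ : ¬orbSetoid N c₁ c₂) ⦃a x : V⦄ (hax : Γ.Adj a x) :
    ∃ c, Γ.Adj a c ∧ ¬orbSetoid N c x := by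
  obtain ⟨g, hg, rfl, rfl⟩ := hCH.exists_map_adj h₁ hax
  refine ⟨g c₂, g.map_adj_iff.mpr h₂, fun h => h₁₂ ((orbSetoid N).symm' ?_)⟩
  simpa using orbSetoid_map hnormal (G.inv_mem hg) h

theorem orbSetoid_or_orbSetoid_of_forall_adj (hconn : Γ.Connected)
    (hnbhd : ∀ y c₁ c₂ : V, Γ.Adj y c₁ → Γ.Adj y c₂ → orbSetoid N c₁ c₂)
    {u v : V} (huv : Γ.Adj u v) (x : V) : orbSetoid N x u ∨ orbSetoid N x v := by
  have hstep : ∀ ⦃u v x y⦄, Γ.Adj u v → Γ.Adj x y → orbSetoid N x u → orbSetoid N y v := by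
    rintro u v x y huv hxy ⟨n, hn, rfl⟩
    exact (orbSetoid N).trans' (orbSetoid_apply_of_mem hn y)
      (hnbhd _ _ _ (n.map_adj_iff.mpr hxy) huv)
  refine hconn.forall_of_adj (P := fun x => orbSetoid N x u ∨ orbSetoid N x v)
    (Or.inl ((orbSetoid N).refl' u)) (fun x y hxy hx => ?_) x
  exact hx.symm.imp (hstep huv.symm hxy) (hstep huv hxy)

theorem eq_of_adj_of_adj_of_orbSetoid (hconn : Γ.Connected) (hCH : IsCH3 Γ G)
    (hncm : ¬_root_.IsCompleteMultipartite Γ) (hnormal : ∀ g ∈ G, ∀ n ∈ N, g * n * g⁻¹ ∈ N)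
    (hthree : ∃ v₁ v₂ v₃ : V, ¬orbSetoid N v₁ v₂ ∧ ¬orbSetoid N v₁ v₃ ∧ ¬orbSetoid N v₂ v₃)
    {u v w : V} (huv : Γ.Adj u v) (huw : Γ.Adj u w) (hrel : orbSetoid N v w) : w = v := by
  by_contra hwv
  have hsep := not_orbSetoid_of_adj hconn hCH hnormal
    (hthree.imp fun _ ⟨v₂, _, h₁₂, _⟩ => ⟨v₂, h₁₂⟩)
  have hpath := orbSetoid_of_induced_path hCH hnormal huv huw (Ne.symm hwv)
    (fun h => hsep h hrel) hrel
  by_cases hnbhd : ∀ y c₁ c₂ : V, Γ.Adj y c₁ → Γ.Adj y c₂ → orbSetoid N c₁ c₂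
  · exact not_three_classes_of_forall_rel_or_rel
      (orbSetoid_or_orbSetoid_of_forall_adj hconn hnbhd huv) hthree
  · push Not at hnbhd
    obtain ⟨y, c₁, c₂, h₁, h₂, h₁₂⟩ := hnbhd
    exact hncm (isCompleteMultipartite_of_exists_adj_not_rel hconn hsep hpath
      (exists_adj_not_orbSetoid hCH hnormal h₁ h₂ h₁₂))

theorem eq_one_of_apply_eq_self (hconn : Γ.Connected)
    (hlocal : ∀ u v w : V, Γ.Adj u v → Γ.Adj u w → orbSetoid N v w → w = v)
    {n : Γ ≃g Γ} (hn : n ∈ N) {v : V} (hv : n v = v) : n = 1 := by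
  ext x
  refine hconn.forall_of_adj (P := fun x => n x = x) hv (fun x y hxy hx => ?_) x
  exact hlocal x y (n y) hxy (hx ▸ n.map_adj_iff.mpr hxy) (orbSetoid_apply_of_mem hn y)

theorem bijOn_neighborSet_quotGraph (hsep : ∀ ⦃a b⦄, Γ.Adj a b → ¬orbSetoid N a b)
    (hlocal : ∀ u v w : V, Γ.Adj u v → Γ.Adj u w → orbSetoid N v w → w = v) (u : V) :
    Set.BijOn (Quotient.mk (orbSetoid N)) (Γ.neighborSet u)
      ((quotGraph Γ N).neighborSet (Quotient.mk (orbSetoid N) u)) := by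
  refine ⟨fun v huv => ⟨fun h => hsep huv (Quotient.exact h), u, v, huv, rfl, rfl⟩,
    fun v huv w huw h => (hlocal u v w huv huw (Quotient.exact h)).symm, ?_⟩
  rintro _ ⟨-, a, b, hab, ha, rfl⟩
  obtain ⟨n, hn, rfl⟩ := Quotient.exact ha
  exact ⟨n b, n.map_adj_iff.mpr hab,
    Quotient.sound ((orbSetoid N).symm' (orbSetoid_apply_of_mem hn b))⟩

end Orbits

theorem quotient_cover_and_semiregular_general {V : Type*}
    (Γ : SimpleGraph V) (G N : Subgroup (Γ ≃g Γ))
    (hconn : Γ.Connected) (hCH : IsCH3 Γ G)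
    (hncm : ¬ _root_.IsCompleteMultipartite Γ)
    (hnormal : ∀ g ∈ G, ∀ n ∈ N, g * n * g⁻¹ ∈ N)
    (h3orb : ∃ v₁ v₂ v₃ : V, ¬ (orbSetoid N).r v₁ v₂ ∧ ¬ (orbSetoid N).r v₁ v₃ ∧
      ¬ (orbSetoid N).r v₂ v₃) :
    (∀ u v w : V, Γ.Adj u v → Γ.Adj u w → (∃ n ∈ N, (n : Γ ≃g Γ) v = w) → w = v) ∧
    (∀ n ∈ N, (∃ v : V, (n : Γ ≃g Γ) v = v) → n = 1) ∧
    (∀ u : V, Set.BijOn (Quotient.mk (orbSetoid N)) (Γ.neighborSet u)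
      ((quotGraph Γ N).neighborSet (Quotient.mk (orbSetoid N) u))) := by
  have hlocal : ∀ u v w : V, Γ.Adj u v → Γ.Adj u w → orbSetoid N v w → w = v :=
    fun _ _ _ huv huw => eq_of_adj_of_adj_of_orbSetoid hconn hCH hncm hnormal h3orb huv huw
  have hsep := not_orbSetoid_of_adj hconn hCH hnormal
    (h3orb.imp fun _ ⟨v₂, _, h₁₂, _⟩ => ⟨v₂, h₁₂⟩)
  exact ⟨hlocal, fun n hn ⟨v, hv⟩ => eq_one_of_apply_eq_self hconn hlocal hn hv,
    bijOn_neighborSet_quotGraph hsep hlocal⟩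

/-- **Theorem 1.4 (cover part).** Let `Γ` be a connected `(G,3)`-CH graph which is
not complete multipartite, and let `N ⊴ G` have at least three orbits on the
vertices.  Then for every edge `{u,v}` the `N`-orbit of `v` meets `Γ(u)` exactly in
`v`; consequently `Γ` is a cover of `Γ_N` (the quotient map is a bijection from each
neighbourhood onto the corresponding quotient neighbourhood) and `N` is semiregular. -/
theorem quotient_cover_and_semiregular {V : Type*} [Fintype V]
    (Γ : SimpleGraph V) (G N : Subgroup (Γ ≃g Γ))
    (hconn : Γ.Connected) (hvt : VertexTrans Γ G) (hCH : IsCH3 Γ G)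
    (hncm : ¬ _root_.IsCompleteMultipartite Γ)
    (hNG : N ≤ G) (hnormal : ∀ g ∈ G, ∀ n ∈ N, g * n * g⁻¹ ∈ N)
    (h3orb : ∃ v₁ v₂ v₃ : V, ¬ (orbSetoid N).r v₁ v₂ ∧ ¬ (orbSetoid N).r v₁ v₃ ∧
      ¬ (orbSetoid N).r v₂ v₃) :
    (∀ u v w : V, Γ.Adj u v → Γ.Adj u w → (∃ n ∈ N, (n : Γ ≃g Γ) v = w) → w = v) ∧
    (∀ n ∈ N, (∃ v : V, (n : Γ ≃g Γ) v = v) → n = 1) ∧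
    (∀ u : V, Set.BijOn (Quotient.mk (orbSetoid N)) (Γ.neighborSet u)
      ((quotGraph Γ N).neighborSet (Quotient.mk (orbSetoid N) u))) :=
  quotient_cover_and_semiregular_general Γ G N hconn hCH hncm hnormal h3orb
end

section
/- Let H be a finite group and S ⊆ H a union of conjugacy classes of involutions generating H, such that every product of two elements of S lies in S ∪ {1} or has a fixed order m. If m is even, then H is a 2-group. -/
/-!
For involutions `s, t` we have `⁅s, t⁆ = (st)² = (sts)t`. If `st` has even order `m`, then `(st)²`
has order `m / 2 ≠ m`, so the hypothesis applied to `sts, t ∈ S` puts `⁅s, t⁆` in `S ∪ {1}`. Thus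
`S` is a normal set of involutions closed under commutators, and any two of its elements generate a
dihedral 2-group. That such an `S` generates a 2-group is an instance of Baer–Suzuki, proved here
directly by induction on `|G|`.

Proper subgroups generated by elements of `S` are 2-groups by induction, hence nilpotent, and a
nontrivial normal one lets us pass to a quotient. For a commutator-closed set `E` in a nilpotent
group with `E ⊄ W`, following commutators down the lower central series gives `t ∈ E \ W` with
`⁅t, E⁆ ⊆ W`; this replaces "normalizers grow in `p`-groups". Among pairs `P ≠ P'` of maximal such
subgroups, choose one maximizing `W = ⟨S ∩ P ∩ P'⟩`. Both `P` and `P'` contain elements of `S \ W`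
normalizing `W`, and these lie in any maximal `P'' ≥ ⟨S ∩ N(W)⟩` (proper, as `W` is not normal). So
if `P'' ≠ P`, the pair `(P, P'')` would beat `(P, P')`; hence `P = P'' = P'`.
-/

open Subgroup
open scoped commutatorElement

section

variable {G : Type*} [Group G]

theorem exists_forall_commutator_mem_of_not_subset {E : Set G}
    (hE : ∀ s ∈ E, ∀ t ∈ E, ⁅s, t⁆ ∈ insert 1 E) (Q : Subgroup G) [Group.IsNilpotent Q]
    {W : Subgroup G} (hEW : ¬E ∩ Q ⊆ W) : ∃ t ∈ E ∩ Q, t ∉ W ∧ ∀ e ∈ E ∩ Q, ⁅t, e⁆ ∈ W := by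
  by_contra! h
  obtain ⟨n, hn⟩ := (isNilpotent_iff_lowerCentralSeries Q).1 ‹_›
  have descend : ∀ k, ∃ t ∈ E ∩ Q, t ∉ W ∧ t ∈ Q.lowerCentralSeries k := by
    intro k
    induction k with
    | zero =>
      obtain ⟨t, htE, htW⟩ := Set.not_subset.1 hEW
      exact ⟨t, htE, htW, htE.2⟩
    | succ k ih =>
      obtain ⟨t, ⟨htE, htQ⟩, htW, htk⟩ := ih
      obtain ⟨e, ⟨heE, heQ⟩, hteW⟩ := h t ⟨htE, htQ⟩ htW
      have hte : ⁅t, e⁆ ≠ 1 := fun h1 => hteW (h1 ▸ W.one_mem)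
      refine ⟨⁅t, e⁆, ⟨(hE t htE e heE).resolve_left hte, ?_⟩, hteW,
        commutator_mem_commutator htk heQ⟩
      rw [commutatorElement_def]
      exact mul_mem (mul_mem (mul_mem htQ heQ) (inv_mem htQ)) (inv_mem heQ)
  obtain ⟨t, -, htW, htn⟩ := descend n
  rw [hn, mem_bot] at htn
  exact htW (htn ▸ W.one_mem)

theorem mem_normalizer_closure_of_conj_mem {t : G} (ht : t * t = 1) {T : Set G}
    (h : ∀ e ∈ T, t * e * t⁻¹ ∈ closure T) : t ∈ normalizer (closure T : Set G) := by
  have hconj : closure T ≤ (closure T).comap (MulAut.conj t).toMonoidHom :=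
    (closure_le _).2 h
  have ht' : t⁻¹ = t := inv_eq_of_mul_eq_one_right ht
  refine mem_normalizer_iff.2 fun g => ⟨fun hg => hconj hg, fun hg => ?_⟩
  have : g = t * (t * g * t⁻¹) * t⁻¹ := by
    rw [ht', ← mul_assoc, ← mul_assoc, ht, one_mul, mul_assoc, ht, mul_one]
  rw [this]
  exact hconj hg

theorem isPGroup_two_closure_pair {s t : G} (hs : s * s = 1) (ht : t * t = 1)
    (hst : ⁅s, t⁆ * ⁅s, t⁆ = 1) : IsPGroup 2 (closure {s, t}) := by
  have hs' : s⁻¹ = s := inv_eq_of_mul_eq_one_right hs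
  have ht' : t⁻¹ = t := inv_eq_of_mul_eq_one_right ht
  have hcomm : ⁅s, t⁆ = (s * t) ^ 2 := by rw [commutatorElement_def, hs', ht', pow_two]; group
  have hs2 : IsPGroup 2 (zpowers s) :=
    .of_card_dvd_pow (n := 1)
      (Nat.card_zpowers s ▸ orderOf_dvd_of_pow_eq_one (by rwa [pow_one, pow_two]))
  have hst2 : IsPGroup 2 (zpowers (s * t)) :=
    .of_card_dvd_pow (n := 2) (Nat.card_zpowers (s * t) ▸ orderOf_dvd_of_pow_eq_one
      (by rw [show 2 ^ 2 = 2 * 2 from rfl, pow_mul, ← hcomm, pow_two, hst]))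
  have hnorm : zpowers s ≤ normalizer (zpowers (s * t) : Set G) := by
    rw [zpowers_le, zpowers_eq_closure]
    refine mem_normalizer_closure_of_conj_mem hs fun e he => ?_
    rw [Set.mem_singleton_iff.1 he, ← zpowers_eq_closure]
    have : s * (s * t) * s⁻¹ = (s * t)⁻¹ := by
      rw [hs', mul_inv_rev, hs', ht', ← mul_assoc, hs, one_mul]
    rw [this]
    exact inv_mem (mem_zpowers _)
  refine (hs2.to_sup_of_normal_right' hst2 hnorm).to_le ((closure_le _).2 ?_)
  refine Set.insert_subset_iff.2 ⟨mem_sup_left (mem_zpowers s), Set.singleton_subset_iff.2 ?_⟩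
  have h := mul_mem (mem_sup_left (mem_zpowers s)) (mem_sup_right (mem_zpowers (s * t)))
  rwa [← mul_assoc, hs, one_mul] at h

theorem IsPGroup.of_quotient {p : ℕ} {V : Subgroup G} [V.Normal] (hV : IsPGroup p V)
    (hQ : IsPGroup p (G ⧸ V)) : IsPGroup p G := fun g => by
  obtain ⟨j, hj⟩ := hQ g
  obtain ⟨k, hk⟩ := hV ⟨g ^ p ^ j, (QuotientGroup.eq_one_iff _).1 (by simpa using hj)⟩
  refine ⟨j + k, ?_⟩
  rw [pow_add, pow_mul]
  simpa using congrArg Subtype.val hk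

theorem closure_inter_closure {S T : Set G} (hT : T ⊆ S) : closure (S ∩ closure T) = closure T :=
  le_antisymm ((closure_le _).2 Set.inter_subset_right)
    (closure_mono fun _ hx => ⟨hT hx, subset_closure hx⟩)

theorem closure_preimage_subtype_eq_top {S : Set G} {K : Subgroup G}
    (hK : closure (S ∩ K) = K) : closure (K.subtype ⁻¹' S) = ⊤ := by
  rw [eq_top_iff, ← map_le_map_iff_of_injective K.subtype_injective, MonoidHom.map_closure,
    ← MonoidHom.range_eq_map, range_subtype, Set.image_preimage_eq_inter_range, coe_subtype,
    Subtype.range_coe, hK]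

end

structure IsCommutatorClosedInvolutions {G : Type*} [Group G] (S : Set G) : Prop where
  conj_mem : ∀ g : G, ∀ s ∈ S, g * s * g⁻¹ ∈ S
  mul_self : ∀ s ∈ S, s * s = 1
  ne_one : ∀ s ∈ S, s ≠ 1
  commutator_mem : ∀ s ∈ S, ∀ t ∈ S, ⁅s, t⁆ ∈ insert 1 S

def properClosures {G : Type*} [Group G] (S : Set G) : Set (Subgroup G) :=
  {K | K ≠ ⊤ ∧ closure (S ∩ K) = K}

theorem closure_mem_properClosures {G : Type*} [Group G] {S T : Set G} (hTS : T ⊆ S)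
    (hT : closure T ≠ ⊤) : closure T ∈ properClosures S :=
  ⟨hT, closure_inter_closure hTS⟩

namespace IsCommutatorClosedInvolutions

variable {G : Type*} [Group G] {S : Set G}

theorem commutator_mul_self (hS : IsCommutatorClosedInvolutions S) {s t : G} (hs : s ∈ S)
    (ht : t ∈ S) : ⁅s, t⁆ * ⁅s, t⁆ = 1 := by
  rcases hS.commutator_mem s hs t ht with h | h
  · rw [h, one_mul]
  · exact hS.mul_self _ h

theorem preimage (hS : IsCommutatorClosedInvolutions S) {H : Type*} [Group H] {f : H →* G}
    (hf : Function.Injective f) : IsCommutatorClosedInvolutions (f ⁻¹' S) where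
  conj_mem g s hs := by simpa using hS.conj_mem (f g) _ hs
  mul_self s hs := hf (by simpa using hS.mul_self _ hs)
  ne_one s hs h := hS.ne_one _ hs (by simp [h])
  commutator_mem s hs t ht := by
    rcases hS.commutator_mem _ hs _ ht with h | h
    · exact .inl (hf (by simpa [map_commutatorElement] using h))
    · exact .inr (by simpa [map_commutatorElement] using h)

theorem image_sdiff_one (hS : IsCommutatorClosedInvolutions S) {H : Type*} [Group H]
    {f : G →* H} (hf : Function.Surjective f) : IsCommutatorClosedInvolutions (f '' S \ {1}) where
  conj_mem := by
    rintro g _ ⟨⟨s, hs, rfl⟩, hs1⟩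
    obtain ⟨g, rfl⟩ := hf g
    refine ⟨⟨_, hS.conj_mem g s hs, by simp⟩, ?_⟩
    simpa using hs1
  mul_self := by
    rintro _ ⟨⟨s, hs, rfl⟩, -⟩
    rw [← map_mul, hS.mul_self s hs, map_one]
  ne_one _ hs := hs.2
  commutator_mem := by
    rintro _ ⟨⟨s, hs, rfl⟩, -⟩ _ ⟨⟨t, ht, rfl⟩, -⟩
    rw [← map_commutatorElement]
    by_cases h1 : f ⁅s, t⁆ = 1
    · exact .inl h1
    · refine .inr ⟨⟨_, (hS.commutator_mem s hs t ht).resolve_left fun h => h1 ?_, rfl⟩, h1⟩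
      rw [h, map_one]

end IsCommutatorClosedInvolutions

namespace IsCommutatorClosedInvolutions

variable {G : Type*} [Group G] [Finite G] {S : Set G}

theorem exists_maximal_ne_mem (hS : IsCommutatorClosedInvolutions S)
    (hpair : ∀ s ∈ S, ∀ t ∈ S, closure {s, t} ≠ ⊤)
    (hnormal : ∀ K ∈ properClosures S, K.Normal → K = ⊥) {s : G} (hs : s ∈ S) :
    ∃ P P', Maximal (· ∈ properClosures S) P ∧ Maximal (· ∈ properClosures S) P' ∧ P ≠ P' ∧
      s ∈ P ∧ s ∈ P' := by
  have hpairP : ∀ t ∈ S, closure {s, t} ∈ properClosures S := fun t ht =>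
    closure_mem_properClosures (Set.insert_subset hs (Set.singleton_subset_iff.2 ht))
      (hpair s hs t ht)
  obtain ⟨P, hleP, hP⟩ := (Set.toFinite (properClosures S)).exists_le_maximal (hpairP s hs)
  have hsP : s ∈ P := hleP (subset_closure (Set.mem_insert s _))
  by_contra! h
  have hconjP : ∀ g : G, g * s * g⁻¹ ∈ P := fun g => by
    obtain ⟨P', hP'le, hP'⟩ :=
      (Set.toFinite (properClosures S)).exists_le_maximal (hpairP _ (hS.conj_mem g s hs))
    by_contra hgP
    have hPP' : P ≠ P' := fun hPP' => hgP (hPP' ▸ hP'le (subset_closure (by simp)))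
    exact h P P' hP hP' hPP' hsP (hP'le (subset_closure (Set.mem_insert s _)))
  have hconj : ∀ x ∈ Group.conjugatesOfSet {s}, x ∈ S ∧ x ∈ P := fun x hx => by
    obtain ⟨a, ha, hax⟩ := Group.mem_conjugatesOfSet_iff.1 hx
    obtain ⟨g, rfl⟩ := isConj_iff.1 hax
    rw [Set.mem_singleton_iff.1 ha]
    exact ⟨hS.conj_mem g s hs, hconjP g⟩
  have hN : normalClosure {s} ∈ properClosures S :=
    closure_mem_properClosures (fun x hx => (hconj x hx).1)
      (ne_top_of_le_ne_top hP.prop.1 ((closure_le _).2 fun x hx => (hconj x hx).2))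
  have hs1 := hnormal _ hN inferInstance ▸ subset_normalClosure (Set.mem_singleton s)
  exact hS.ne_one s hs hs1

theorem exists_maximal_lt_closure_inter (hS : IsCommutatorClosedInvolutions S)
    (hnil : ∀ K ∈ properClosures S, Group.IsNilpotent K)
    (hnormal : ∀ K ∈ properClosures S, K.Normal → K = ⊥) {P P' : Subgroup G}
    (hP : Maximal (· ∈ properClosures S) P) (hP' : Maximal (· ∈ properClosures S) P')
    (hPP' : P ≠ P') (hW : closure (S ∩ P ∩ P') ≠ ⊥) :
    ∃ Q Q', Maximal (· ∈ properClosures S) Q ∧ Maximal (· ∈ properClosures S) Q' ∧ Q ≠ Q' ∧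
      closure (S ∩ P ∩ P') < closure (S ∩ Q ∩ Q') := by
  set W := closure (S ∩ P ∩ P')
  have hWS : S ∩ P ∩ P' ⊆ S := fun x hx => hx.1.1
  have hWP : W ≤ P := (closure_le _).2 fun x hx => hx.1.2
  have hWP' : W ≤ P' := (closure_le _).2 fun x hx => hx.2
  have hN : normalizer (W : Set G) ≠ ⊤ := fun h =>
    hW (hnormal W (closure_mem_properClosures hWS (ne_top_of_le_ne_top hP.prop.1 hWP))
      (normalizer_eq_top_iff.1 h))
  obtain ⟨P'', hNP'', hP''⟩ := (Set.toFinite (properClosures S)).exists_le_maximal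
    (closure_mem_properClosures (S := S) Set.inter_subset_left
      (ne_top_of_le_ne_top hN ((closure_le _).2 Set.inter_subset_right)))
  have hWP'' : S ∩ P ∩ P' ⊆ P'' := fun x hx =>
    hNP'' (subset_closure ⟨hx.1.1, le_normalizer (subset_closure hx)⟩)
  have hmax_le {Q : Subgroup G} (hQ : Maximal (· ∈ properClosures S) Q) (hQW : S ∩ Q ⊆ W) :
      Q ≤ W := hQ.prop.2 ▸ (closure_le _).2 hQW
  have step : ∀ Q, Maximal (· ∈ properClosures S) Q → S ∩ P ∩ P' ⊆ Q → ¬S ∩ Q ⊆ W →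
      Q = P'' ∨ W < closure (S ∩ Q ∩ P'') ∧ Q ≠ P'' := by
    intro Q hQ hWQ hQW
    have := hnil Q hQ.prop
    obtain ⟨t, ⟨htS, htQ⟩, htW, ht⟩ :=
      exists_forall_commutator_mem_of_not_subset hS.commutator_mem Q hQW
    have htN : t ∈ normalizer (W : Set G) :=
      mem_normalizer_closure_of_conj_mem (hS.mul_self t htS) fun e he => by
        simpa [commutatorElement_def] using
          mul_mem (ht e ⟨he.1.1, hWQ he⟩) (subset_closure he : e ∈ W)
    have htP'' : t ∈ P'' := hNP'' (subset_closure ⟨htS, htN⟩)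
    refine or_iff_not_imp_left.2 fun hQP'' => ⟨lt_of_le_of_ne ?_ fun h => htW ?_, hQP''⟩
    · exact closure_mono fun x hx => ⟨⟨hx.1.1, hWQ hx⟩, hWP'' hx⟩
    · exact h ▸ subset_closure ⟨⟨htS, htQ⟩, htP''⟩
  have hPW : ¬S ∩ P ⊆ W := fun h =>
    hPP' (hP.eq_of_ge hP'.prop ((hmax_le hP h).trans hWP')).symm
  have hP'W : ¬S ∩ P' ⊆ W := fun h =>
    hPP' (hP'.eq_of_ge hP.prop ((hmax_le hP' h).trans hWP))
  rcases step P hP (fun x hx => hx.1.2) hPW with rfl | ⟨hlt, hne⟩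
  · rcases step P' hP' (fun x hx => hx.2) hP'W with rfl | ⟨hlt, hne⟩
    · exact absurd rfl hPP'
    · exact ⟨P', P, hP', hP, hne, hlt⟩
  · exact ⟨P, P'', hP, hP'', hne, hlt⟩

theorem exists_normal_mem_properClosures (hS : IsCommutatorClosedInvolutions S)
    (hne : S.Nonempty) (hpair : ∀ s ∈ S, ∀ t ∈ S, closure {s, t} ≠ ⊤)
    (hnil : ∀ K ∈ properClosures S, Group.IsNilpotent K) :
    ∃ K ∈ properClosures S, K.Normal ∧ K ≠ ⊥ := by
  by_contra! hnormal
  obtain ⟨s, hs⟩ := hne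
  let pairs : Set (Subgroup G × Subgroup G) := {PP' | Maximal (· ∈ properClosures S) PP'.1 ∧
    Maximal (· ∈ properClosures S) PP'.2 ∧ PP'.1 ≠ PP'.2 ∧ closure (S ∩ PP'.1 ∩ PP'.2) ≠ ⊥}
  obtain ⟨P, P', hP, hP', hPP', hsP, hsP'⟩ := hS.exists_maximal_ne_mem hpair hnormal hs
  have hpairs : (P, P') ∈ pairs := by
    refine ⟨hP, hP', hPP', fun h => hS.ne_one s hs ?_⟩
    have hsW : s ∈ closure (S ∩ P ∩ P') := subset_closure ⟨⟨hs, hsP⟩, hsP'⟩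
    rwa [h, mem_bot] at hsW
  obtain ⟨⟨P, P'⟩, ⟨hP, hP', hPP', hW⟩, hmax⟩ := (Set.toFinite pairs).exists_maximalFor
    (fun PP' => closure (S ∩ PP'.1 ∩ PP'.2)) pairs ⟨_, hpairs⟩
  obtain ⟨Q, Q', hQ, hQ', hQQ', hlt⟩ :=
    hS.exists_maximal_lt_closure_inter hnil hnormal hP hP' hPP' hW
  have hle : closure (S ∩ Q ∩ Q') ≤ closure (S ∩ P ∩ P') :=
    hmax (j := (Q, Q')) ⟨hQ, hQ', hQQ', (bot_le.trans_lt hlt).ne'⟩ hlt.le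
  exact hlt.not_ge hle

end IsCommutatorClosedInvolutions

theorem IsCommutatorClosedInvolutions.isPGroup_two {G : Type*} [Group G] [Finite G] {S : Set G}
    (hS : IsCommutatorClosedInvolutions S) (hgen : closure S = ⊤) : IsPGroup 2 G := by
  induction hn : Nat.card G using Nat.strong_induction_on generalizing G with
  | _ n ih =>
  subst hn
  rcases S.eq_empty_or_nonempty with rfl | hne
  · refine fun g => ⟨0, ?_⟩
    have hg : g ∈ closure (∅ : Set G) := hgen ▸ mem_top g
    rw [Subgroup.closure_empty, mem_bot] at hg
    rw [hg, one_pow]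
  have hsub : ∀ K ∈ properClosures S, IsPGroup 2 K := fun K hK =>
    ih _ (K.card_le_card_group.lt_of_ne (mt K.card_eq_iff_eq_top.1 hK.1))
      (hS.preimage K.subtype_injective) (closure_preimage_subtype_eq_top hK.2) rfl
  by_cases hpair : ∃ s ∈ S, ∃ t ∈ S, closure {s, t} = ⊤
  · obtain ⟨s, hs, t, ht, hst⟩ := hpair
    have := isPGroup_two_closure_pair (hS.mul_self s hs) (hS.mul_self t ht)
      (hS.commutator_mul_self hs ht)
    rw [hst] at this
    exact this.of_equiv topEquiv
  push Not at hpair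
  obtain ⟨K, hK, hKn, hKbot⟩ :=
    hS.exists_normal_mem_properClosures hne hpair fun K hK => (hsub K hK).isNilpotent
  have hcard : Nat.card (G ⧸ K) < Nat.card G := by
    rw [card_eq_card_quotient_mul_card_subgroup K]
    exact lt_mul_of_one_lt_right Nat.card_pos ((one_lt_card_iff_ne_bot K).2 hKbot)
  refine (hsub K hK).of_quotient
    (ih _ hcard (hS.image_sdiff_one (QuotientGroup.mk'_surjective K)) ?_ rfl)
  rw [closure_sdiff_one, ← MonoidHom.map_closure, hgen, ← MonoidHom.range_eq_map,
    QuotientGroup.range_mk']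

theorem IsCommutatorClosedInvolutions.of_orderOf_mul_eq {G : Type*} [Group G] [Finite G]
    {S : Set G} (hconj : ∀ g : G, ∀ s ∈ S, g * s * g⁻¹ ∈ S)
    (hinvol : ∀ s ∈ S, s * s = 1 ∧ s ≠ 1) {m : ℕ}
    (horder : ∀ s ∈ S, ∀ t ∈ S, s * t ∈ S ∪ {1} ∨ orderOf (s * t) = m) (hm : Even m) :
    IsCommutatorClosedInvolutions S := by
  refine ⟨hconj, fun s hs => (hinvol s hs).1, fun s hs => (hinvol s hs).2, fun s hs t ht => ?_⟩
  have hinv : ∀ s ∈ S, s⁻¹ = s := fun s hs => inv_eq_of_mul_eq_one_right (hinvol s hs).1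
  have hcomm : ⁅s, t⁆ = s * t * s⁻¹ * t := by rw [commutatorElement_def, hinv t ht]
  have hsq : ⁅s, t⁆ = (s * t) ^ 2 := by
    rw [hcomm, hinv s hs, pow_two, mul_assoc]
  rw [Set.insert_eq, Set.union_comm]
  rcases horder _ (hconj s t ht) t ht with h | hm2
  · rwa [hcomm]
  rcases horder s hs t ht with h | hm1
  · have hst : (s * t) * (s * t) = 1 := by
      rcases h with h | h
      · exact (hinvol _ h).1
      · rw [Set.mem_singleton_iff.1 h, one_mul]
    rw [hsq, pow_two, hst]
    exact .inr rfl
  rw [← hcomm, hsq, orderOf_pow, hm1, Nat.gcd_eq_right hm.two_dvd] at hm2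
  have := hm1 ▸ orderOf_pos (s * t)
  omega

/-- **Lemma 5.1 (final part, via Baer–Suzuki).** Let `H` be a finite group and
`S ⊆ H` a union of conjugacy classes of involutions generating `H`, such that every
product of two elements of `S` lies in `S ∪ {1}` or has a fixed order `m`.  If `m`
is even, then `H` is a 2-group. -/
theorem two_group_of_even_m {H : Type*} [Group H] [Finite H]
    (S : Set H) (hconj : ∀ h : H, ∀ s ∈ S, h * s * h⁻¹ ∈ S)
    (hinvol : ∀ s ∈ S, s * s = 1 ∧ s ≠ 1)
    (hgen : Subgroup.closure S = ⊤)
    (m : ℕ)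
    (horder : ∀ s ∈ S, ∀ t ∈ S, s * t ∈ S ∪ {1} ∨ orderOf (s * t) = m)
    (hm : Even m) :
    IsPGroup 2 H :=
  (IsCommutatorClosedInvolutions.of_orderOf_mul_eq hconj hinvol horder hm).isPGroup_two hgen
end

section
/- Let G be an almost simple 2-transitive permutation group on Ω with socle T, α ∈ Ω, with G_α acting 2-transitively on Δ with kernel K, T_α transitive on Δ, δ ∈ Δ, and t ∈ T a non-identity element centralizing T_{αδ}. If T_α ∩ K ≠ 1, then t ∈ T_α. -/
/-- The kernel of an action of `M` on `Δ`. -/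
def actionKernel (M : Type*) [Group M] (Δ : Type*) [MulAction M Δ] : Subgroup M where
  carrier := {g | ∀ d : Δ, g • d = d}
  one_mem' := fun d => one_smul _ d
  mul_mem' := by intro a b ha hb d; rw [mul_smul, hb d, ha d]
  inv_mem' := by intro a ha d; conv_lhs => rw [← ha d]; rw [inv_smul_smul]

/-- **Lemma 6.5.** Let `G` be an almost simple 2-transitive permutation group on
`Ω` with socle `T`, `α ∈ Ω`, with `G_α` acting 2-transitively on `Δ` with kernel
`K`, `T_α` transitive on `Δ`, `δ ∈ Δ`, and `t ∈ T` a non-identity element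
centralizing `T_{αδ}`.  If `T_α ∩ K ≠ 1`, then `t ∈ T_α`. -/
theorem mem_stabilizer_of_kernel_intersection_nontrivial
    {G : Type*} [Group G] {Ω : Type*} [Finite Ω] [MulAction G Ω]
    (T : Subgroup G) [T.Normal] (hsimple : IsSimpleGroup ↥T)
    (hnonab : ∃ a b : ↥T, a * b ≠ b * a)
    (hcent : Subgroup.centralizer (T : Set G) = ⊥)
    (h2t : ∀ a b c d : Ω, a ≠ b → c ≠ d → ∃ g : G, g • a = c ∧ g • b = d)
    (α : Ω) {Δ : Type*} [Finite Δ] [MulAction ↥(MulAction.stabilizer G α) Δ]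
    (hTtrans : ∀ d e : Δ, ∃ s ∈ T.subgroupOf (MulAction.stabilizer G α), s • d = e)
    (h2Δ : ∀ a b c d : Δ, a ≠ b → c ≠ d →
      ∃ g : ↥(MulAction.stabilizer G α), g • a = c ∧ g • b = d)
    (δ : Δ)
    (t : G) (htT : t ∈ T) (htne : t ≠ 1)
    (hcomm : ∀ x : ↥(MulAction.stabilizer G α),
      x ∈ T.subgroupOf (MulAction.stabilizer G α) ⊓
        MulAction.stabilizer (↥(MulAction.stabilizer G α)) δ →
      Commute t (x : G))
    (hK : T.subgroupOf (MulAction.stabilizer G α) ⊓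
        actionKernel (↥(MulAction.stabilizer G α)) Δ ≠ ⊥) :
    t ∈ MulAction.stabilizer G α := by
  classical
  by_contra hβ
  rw [MulAction.mem_stabilizer_iff] at hβ
  -- a nontrivial element of X = T_α ⊓ K
  obtain ⟨⟨x, hx⟩, hx1⟩ := Subgroup.ne_bot_iff_exists_ne_one.mp hK
  have hx1' : (x : G) ≠ 1 := by
    intro h
    apply hx1
    ext
    simpa using h
  -- elements of X fix t • α
  have key : ∀ y : ↥(MulAction.stabilizer G α),
      y ∈ T.subgroupOf (MulAction.stabilizer G α) ⊓
        actionKernel (↥(MulAction.stabilizer G α)) Δ → (y : G) • (t • α) = t • α := by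
    intro y hy
    have hyδ : y ∈ MulAction.stabilizer (↥(MulAction.stabilizer G α)) δ := by
      rw [MulAction.mem_stabilizer_iff]
      exact hy.2 δ
    have hc : Commute t (y : G) := hcomm y ⟨hy.1, hyδ⟩
    have hyα : (y : G) • α = α := y.2
    calc (y : G) • t • α = ((y : G) * t) • α := by rw [mul_smul]
      _ = (t * (y : G)) • α := by rw [hc.eq]
      _ = t • ((y : G) • α) := by rw [mul_smul]
      _ = t • α := by rw [hyα]
  -- X is closed under conjugation
  have conjX : ∀ g y : ↥(MulAction.stabilizer G α),
      y ∈ T.subgroupOf (MulAction.stabilizer G α) ⊓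
        actionKernel (↥(MulAction.stabilizer G α)) Δ →
      g⁻¹ * y * g ∈ T.subgroupOf (MulAction.stabilizer G α) ⊓
        actionKernel (↥(MulAction.stabilizer G α)) Δ := by
    intro g y hy
    refine Subgroup.mem_inf.mpr ⟨?_, ?_⟩
    · rw [Subgroup.mem_subgroupOf]
      have hyT : (y : G) ∈ T := Subgroup.mem_subgroupOf.mp hy.1
      have := ‹T.Normal›.conj_mem _ hyT (↑g)⁻¹
      simpa [mul_assoc] using this
    · intro d
      have h1 : y • (g • d) = g • d := hy.2 (g • d)
      calc (g⁻¹ * y * g) • d = g⁻¹ • y • g • d := by rw [mul_smul, mul_smul]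
        _ = g⁻¹ • g • d := by rw [h1]
        _ = d := inv_smul_smul g d
  -- elements of X fix every point of Ω
  have allfix : ∀ y : ↥(MulAction.stabilizer G α),
      y ∈ T.subgroupOf (MulAction.stabilizer G α) ⊓
        actionKernel (↥(MulAction.stabilizer G α)) Δ →
      ∀ γ : Ω, (y : G) • γ = γ := by
    intro y hy γ
    by_cases hγ : γ = α
    · subst hγ; exact y.2
    · obtain ⟨g, hg1, hg2⟩ := h2t α (t • α) α γ (Ne.symm hβ) (Ne.symm hγ)
      have hgS : g ∈ MulAction.stabilizer G α := hg1
      have hy' := conjX ⟨g, hgS⟩ y hy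
      have hfix := key _ hy'
      have hcoe : ((⟨g, hgS⟩⁻¹ * y * ⟨g, hgS⟩ :
          ↥(MulAction.stabilizer G α)) : G) = g⁻¹ * (y : G) * g := rfl
      rw [hcoe] at hfix
      calc (y : G) • γ = (y : G) • g • (t • α) := by rw [hg2]
        _ = g • ((g⁻¹ * (y : G) * g) • (t • α)) := by
            rw [mul_smul, mul_smul, smul_inv_smul]
        _ = g • (t • α) := by rw [hfix]
        _ = γ := hg2
  -- the kernel of G on Ω is normal
  have hkerN : (actionKernel G Ω).Normal := by
    constructor
    intro n hn g d
    show (g * n * g⁻¹) • d = d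
    rw [mul_smul, mul_smul, hn (g⁻¹ • d), smul_inv_smul]
  haveI := hsimple
  haveI : ((actionKernel G Ω).subgroupOf T).Normal := hkerN.subgroupOf T
  rcases this.eq_bot_or_eq_top with h | h
  · -- impossible: x gives a nontrivial element
    have hxT : (x : G) ∈ T := Subgroup.mem_subgroupOf.mp hx.1
    have hxker : (x : G) ∈ actionKernel G Ω := fun d => allfix x hx d
    have hmem : (⟨(x : G), hxT⟩ : ↥T) ∈ (actionKernel G Ω).subgroupOf T :=
      Subgroup.mem_subgroupOf.mpr hxker
    rw [h, Subgroup.mem_bot] at hmem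
    exact hx1' (by simpa using congrArg Subtype.val hmem)
  · -- then t fixes α, contradiction
    have : (⟨t, htT⟩ : ↥T) ∈ (actionKernel G Ω).subgroupOf T := by
      rw [h]; trivial
    exact hβ (Subgroup.mem_subgroupOf.mp this α)
end
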